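/- arXiv:math-ph/0110017 — 3 statements merged into one kernel-verified Lean document; each statement's English description precedes it below -/
import Mathlib

section
/- On the spin-1/2 ladder of L sites and 2J legs, the compression of the decoupled Hamiltonian by the rung-symmetrization projection equals 1/(2J) times the compression of the full ladder Hamiltonian: P_{[1,L]} H̿ P_{[1,L]} = (1/(2J)) P_{[1,L]} H̃ P_{[1,L]}. -/
open scoped BigOperators Classical

noncomputable section

namespace XXZ

/-- `m`-value of the basis index `k` for spin `J = twoJ/2`: `m = k - twoJ/2`. -/
def mval (twoJ : ℕ) (k : Fin (twoJ + 1)) : ℝ := (k : ℝ) - (twoJ : ℝ) / 2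

/-- The third spin matrix `S³` for spin `J = twoJ/2`. -/
def S3 (twoJ : ℕ) : Matrix (Fin (twoJ + 1)) (Fin (twoJ + 1)) ℂ :=
  Matrix.diagonal fun k => ((mval twoJ k : ℝ) : ℂ)

/-- The raising operator `S⁺`. -/
def Splus (twoJ : ℕ) : Matrix (Fin (twoJ + 1)) (Fin (twoJ + 1)) ℂ :=
  Matrix.of fun k' k => if (k' : ℕ) = (k : ℕ) + 1 then
    ((Real.sqrt ((twoJ : ℝ) / 2 * ((twoJ : ℝ) / 2 + 1) - mval twoJ k * (mval twoJ k + 1)) : ℝ) : ℂ)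
  else 0

/-- The lowering operator `S⁻`. -/
def Sminus (twoJ : ℕ) : Matrix (Fin (twoJ + 1)) (Fin (twoJ + 1)) ℂ :=
  Matrix.of fun k' k => if (k' : ℕ) + 1 = (k : ℕ) then
    ((Real.sqrt ((twoJ : ℝ) / 2 * ((twoJ : ℝ) / 2 + 1) - mval twoJ k * (mval twoJ k - 1)) : ℝ) : ℂ)
  else 0

/-- `S¹ = (S⁺ + S⁻)/2`. -/
def S1 (twoJ : ℕ) : Matrix (Fin (twoJ + 1)) (Fin (twoJ + 1)) ℂ :=
  (2 : ℂ)⁻¹ • (Splus twoJ + Sminus twoJ)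

/-- `S² = (S⁺ - S⁻)/(2i)`. -/
def S2 (twoJ : ℕ) : Matrix (Fin (twoJ + 1)) (Fin (twoJ + 1)) ℂ :=
  (2 * Complex.I)⁻¹ • (Splus twoJ - Sminus twoJ)

/-- A single-site operator `A` acting at the site `α` of a many-site system. -/
def oneSite {ι : Type*} [Fintype ι] [DecidableEq ι] {d : ℕ}
    (A : Matrix (Fin d) (Fin d) ℂ) (α : ι) :
    Matrix (ι → Fin d) (ι → Fin d) ℂ :=
  Matrix.of fun σ τ => A (σ α) (τ α) *
    ∏ β ∈ Finset.univ.filter (fun β => β ≠ α), (if σ β = τ β then (1 : ℂ) else 0)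

/-- The XXZ interaction `h^J(α,β)` for spin `J = twoJ/2` with anisotropy `Δ`:
`h = J²·1 − S³_α S³_β − Δ⁻¹(S¹_α S¹_β + S²_α S²_β) + J√(1−Δ⁻²)(S³_α − S³_β)`. -/
def hInt (twoJ : ℕ) (Δ : ℝ) {ι : Type*} [Fintype ι] [DecidableEq ι] (α β : ι) :
    Matrix (ι → Fin (twoJ + 1)) (ι → Fin (twoJ + 1)) ℂ :=
  ((((twoJ : ℝ) / 2) ^ 2 : ℝ) : ℂ) • (1 : Matrix (ι → Fin (twoJ + 1)) (ι → Fin (twoJ + 1)) ℂ)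
    - oneSite (S3 twoJ) α * oneSite (S3 twoJ) β
    - ((Δ⁻¹ : ℝ) : ℂ) • (oneSite (S1 twoJ) α * oneSite (S1 twoJ) β
        + oneSite (S2 twoJ) α * oneSite (S2 twoJ) β)
    + (((twoJ : ℝ) / 2 * Real.sqrt (1 - Δ⁻¹ ^ 2) : ℝ) : ℂ) •
        (oneSite (S3 twoJ) α - oneSite (S3 twoJ) β)

/-- The spin-`J` XXZ chain Hamiltonian `H^J_{[1,L]} = Σ_{α=1}^{L-1} h^J(α,α+1)`. -/
def Hchain (twoJ L : ℕ) (Δ : ℝ) :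
    Matrix (Fin L → Fin (twoJ + 1)) (Fin L → Fin (twoJ + 1)) ℂ :=
  ∑ x : Fin L, if h : (x : ℕ) + 1 < L then hInt twoJ Δ x ⟨(x : ℕ) + 1, h⟩ else 0

/-- Total third component of spin `S³_tot = Σ_α S³_α`. -/
def S3tot (twoJ : ℕ) {ι : Type*} [Fintype ι] [DecidableEq ι] :
    Matrix (ι → Fin (twoJ + 1)) (ι → Fin (twoJ + 1)) ℂ :=
  ∑ α : ι, oneSite (S3 twoJ) α

/-- The standard inner product, antilinear in the first argument. -/
def ip {n : Type*} [Fintype n] (v w : n → ℂ) : ℂ :=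
  ∑ i, (starRingEnd ℂ) (v i) * w i

/-- `ψ` lies in the sector of total `S³`-eigenvalue `M`. -/
def inSector (twoJ : ℕ) {ι : Type*} [Fintype ι] [DecidableEq ι]
    (M : ℝ) (ψ : (ι → Fin (twoJ + 1)) → ℂ) : Prop :=
  (S3tot twoJ).mulVec ψ = (M : ℂ) • ψ

/-- The spectral gap `γ([1,L],J,M)`: the infimum of the Rayleigh quotient of `H^J_{[1,L]}`
over nonzero vectors of the sector `M` orthogonal to the kernel of `H^J_{[1,L]}` in that
sector. -/
def gap (twoJ L : ℕ) (Δ M : ℝ) : ℝ :=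
  sInf { r : ℝ | ∃ ψ : (Fin L → Fin (twoJ + 1)) → ℂ, ψ ≠ 0 ∧
    inSector twoJ M ψ ∧
    (∀ φ : (Fin L → Fin (twoJ + 1)) → ℂ,
      (Hchain twoJ L Δ).mulVec φ = 0 → inSector twoJ M φ → ip φ ψ = 0) ∧
    r = (ip ψ ((Hchain twoJ L Δ).mulVec ψ)).re / (ip ψ ψ).re }

/-- The full spin-1/2 ladder Hamiltonian `H̃` with `2J` legs. -/
def Hladder (twoJ L : ℕ) (Δ : ℝ) :
    Matrix ((Fin L × Fin twoJ) → Fin (1 + 1)) ((Fin L × Fin twoJ) → Fin (1 + 1)) ℂ :=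
  ∑ x : Fin L, ∑ j : Fin twoJ, ∑ k : Fin twoJ,
    if h : (x : ℕ) + 1 < L then hInt 1 Δ (x, j) ((⟨(x : ℕ) + 1, h⟩ : Fin L), k) else 0

/-- The decoupled spin-1/2 ladder Hamiltonian `H̿` (2J disjoint spin-1/2 chains). -/
def Hdec (twoJ L : ℕ) (Δ : ℝ) :
    Matrix ((Fin L × Fin twoJ) → Fin (1 + 1)) ((Fin L × Fin twoJ) → Fin (1 + 1)) ℂ :=
  ∑ x : Fin L, ∑ j : Fin twoJ,
    if h : (x : ℕ) + 1 < L then hInt 1 Δ (x, j) ((⟨(x : ℕ) + 1, h⟩ : Fin L), j) else 0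

/-- The orthogonal projection `P_{[1,L]} = Π_α P_α` onto tensors symmetric under
permutations within each rung `{α}×[1,2J]` (the average of the rung-permutation
unitaries). -/
def Psym (twoJ L : ℕ) :
    Matrix ((Fin L × Fin twoJ) → Fin (1 + 1)) ((Fin L × Fin twoJ) → Fin (1 + 1)) ℂ :=
  ((Nat.factorial twoJ : ℂ) ^ L)⁻¹ •
    ∑ π : Fin L → Equiv.Perm (Fin twoJ),
      Matrix.of fun σ τ =>
        if (∀ p : Fin L × Fin twoJ, τ p = σ (p.1, (π p.1) p.2)) then (1 : ℂ) else 0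

/-- Membership in the ground state space `𝒢(Λ̃,M) = ker H̃ ∩ ℋ(Λ̃,M)`. -/
def inG (twoJ L : ℕ) (Δ M : ℝ) (ψ : ((Fin L × Fin twoJ) → Fin (1 + 1)) → ℂ) : Prop :=
  (Hladder twoJ L Δ).mulVec ψ = 0 ∧ inSector 1 M ψ

/-- Membership in `ℋ₀(Λ̃,M) = ker H̿ ∩ ℋ(Λ̃,M)`. -/
def inH0 (twoJ L : ℕ) (Δ M : ℝ) (ψ : ((Fin L × Fin twoJ) → Fin (1 + 1)) → ℂ) : Prop :=
  (Hdec twoJ L Δ).mulVec ψ = 0 ∧ inSector 1 M ψ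

/-- Membership in `ℋ_{0,⊥}(Λ̃,M) = ℋ₀(Λ̃,M) ∩ 𝒢(Λ̃,M)^⊥`. -/
def inH0perp (twoJ L : ℕ) (Δ M : ℝ) (ψ : ((Fin L × Fin twoJ) → Fin (1 + 1)) → ℂ) : Prop :=
  inH0 twoJ L Δ M ψ ∧ ∀ φ, inG twoJ L Δ M φ → ip φ ψ = 0

/-- `δ([1,L],J,M) = sup{⟨ψ, P_{[1,L]} ψ⟩/⟨ψ,ψ⟩ : 0 ≠ ψ ∈ ℋ_{0,⊥}(Λ̃,M)}`
(`sSup ∅ = 0` in ℝ, matching the convention that `δ = 0` if `ℋ_{0,⊥} = {0}`). -/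
def delta (twoJ L : ℕ) (Δ M : ℝ) : ℝ :=
  sSup { r : ℝ | ∃ ψ : ((Fin L × Fin twoJ) → Fin (1 + 1)) → ℂ, ψ ≠ 0 ∧
    inH0perp twoJ L Δ M ψ ∧
    r = (ip ψ ((Psym twoJ L).mulVec ψ)).re / (ip ψ ψ).re }

/-! Rung permutations act on configurations by permutation matrices `U`, and `P_{[1,L]}` is
their average, so `P U = U P = P`. Conjugating by `U` moves the interaction
`h((x,j),(x+1,k))` to the permuted sites; a swap on rung `x+1` therefore shows that
`P h((x,j),(x+1,k)) P` does not depend on `k`, and averaging over `k` matches each term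
of `H̿` with `1/(2J)` times the corresponding row of terms of `H̃`. -/

open Equiv

section SitePermutation

variable {ι : Type*} [Fintype ι] [DecidableEq ι] {d : ℕ}

def sitePermMatrix : Perm ι →* Matrix (ι → Fin d) (ι → Fin d) ℂ where
  toFun e := Perm.permMatrix ℂ (e.symm.arrowCongr (Equiv.refl (Fin d)))
  map_one' := Matrix.permMatrix_one
  map_mul' e e' := by
    rw [← Matrix.permMatrix_mul]
    rfl

lemma sitePermMatrix_mul (e : Perm ι) (M : Matrix (ι → Fin d) (ι → Fin d) ℂ) :
    sitePermMatrix e * M = M.submatrix (fun σ => σ ∘ e) id :=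
  PEquiv.toMatrix_toPEquiv_mul _ M

lemma mul_sitePermMatrix (e : Perm ι) (M : Matrix (ι → Fin d) (ι → Fin d) ℂ) :
    M * sitePermMatrix e = M.submatrix id (fun τ => τ ∘ e.symm) :=
  PEquiv.mul_toMatrix_toPEquiv M _

lemma sitePermMatrix_apply (e : Perm ι) (σ τ : ι → Fin d) :
    sitePermMatrix e σ τ = if τ = σ ∘ e then 1 else 0 := by
  show Perm.permMatrix ℂ _ σ τ = _
  simp [PEquiv.toMatrix_apply, eq_comm, Equiv.arrowCongr, Function.comp_def]

lemma sitePermMatrix_mul_oneSite (e : Perm ι) (A : Matrix (Fin d) (Fin d) ℂ) (q : ι) :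
    sitePermMatrix e * oneSite A q = oneSite A (e q) * sitePermMatrix e := by
  ext σ τ
  simp only [sitePermMatrix_mul, mul_sitePermMatrix, Matrix.submatrix_apply, oneSite,
    Matrix.of_apply, id, Function.comp_apply, symm_apply_apply]
  congr 1
  rw [Finset.prod_filter, Finset.prod_filter]
  refine Fintype.prod_equiv e _ _ fun β => ?_
  simp only [ne_eq, e.apply_eq_iff_eq, symm_apply_apply]

lemma sitePermMatrix_mul_hInt (twoJ : ℕ) (Δ : ℝ) (e : Perm ι) (q q' : ι) :
    sitePermMatrix e * hInt twoJ Δ q q' = hInt twoJ Δ (e q) (e q') * sitePermMatrix e := by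
  simp only [hInt, mul_sub, sub_mul, mul_add, add_mul, mul_smul_comm, smul_mul_assoc, mul_one,
    one_mul, ← mul_assoc, sitePermMatrix_mul_oneSite]
  simp only [mul_assoc, sitePermMatrix_mul_oneSite]

end SitePermutation

section Averaging

variable {G R : Type*} [Group G] [Fintype G] [Semiring R]

lemma sum_mul_map_eq_sum (ρ : G →* R) (h : G) : (∑ g, ρ g) * ρ h = ∑ g, ρ g := by
  simp only [Finset.sum_mul, ← map_mul]
  exact Fintype.sum_equiv (Equiv.mulRight h) _ _ fun _ => rfl

lemma map_mul_sum_eq_sum (ρ : G →* R) (h : G) : ρ h * ∑ g, ρ g = ∑ g, ρ g := by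
  simp only [Finset.mul_sum, ← map_mul]
  exact Fintype.sum_equiv (Equiv.mulLeft h) _ _ fun _ => rfl

end Averaging

def rungPerm {α β : Type*} : (α → Perm β) →* Perm (α × β) where
  toFun := Equiv.prodCongrRight
  map_one' := rfl
  map_mul' _ _ := rfl

@[simp]
lemma rungPerm_apply {α β : Type*} (π : α → Perm β) (p : α × β) :
    rungPerm π p = (p.1, π p.1 p.2) :=
  rfl

lemma Psym_eq_smul_sum (twoJ L : ℕ) :
    Psym twoJ L = ((Nat.factorial twoJ : ℂ) ^ L)⁻¹ •
      ∑ π : Fin L → Perm (Fin twoJ), sitePermMatrix (rungPerm π) := by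
  refine congrArg _ (Finset.sum_congr rfl fun π _ => ?_)
  ext σ τ
  simp only [Matrix.of_apply, sitePermMatrix_apply, funext_iff]
  rfl

lemma Psym_mul_rungPerm (twoJ L : ℕ) (π : Fin L → Perm (Fin twoJ)) :
    Psym twoJ L * sitePermMatrix (rungPerm π) = Psym twoJ L := by
  have h := sum_mul_map_eq_sum ((sitePermMatrix (d := 1 + 1)).comp rungPerm) π
  simp only [MonoidHom.comp_apply] at h
  rw [Psym_eq_smul_sum, smul_mul_assoc, h]

lemma rungPerm_mul_Psym (twoJ L : ℕ) (π : Fin L → Perm (Fin twoJ)) :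
    sitePermMatrix (rungPerm π) * Psym twoJ L = Psym twoJ L := by
  have h := map_mul_sum_eq_sum ((sitePermMatrix (d := 1 + 1)).comp rungPerm) π
  simp only [MonoidHom.comp_apply] at h
  rw [Psym_eq_smul_sum, mul_smul_comm, h]

lemma Psym_hInt_Psym_eq_of_rungPerm (twoJ L : ℕ) (Δ : ℝ) (π : Fin L → Perm (Fin twoJ))
    (q q' : Fin L × Fin twoJ) :
    Psym twoJ L * hInt 1 Δ q q' * Psym twoJ L =
      Psym twoJ L * hInt 1 Δ (rungPerm π q) (rungPerm π q') * Psym twoJ L := by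
  set P := Psym twoJ L
  calc P * hInt 1 Δ q q' * P
      = P * sitePermMatrix (rungPerm π) * hInt 1 Δ q q' * P := by rw [Psym_mul_rungPerm]
    _ = P * hInt 1 Δ (rungPerm π q) (rungPerm π q') * (sitePermMatrix (rungPerm π) * P) := by
      rw [mul_assoc P, sitePermMatrix_mul_hInt]
      simp only [mul_assoc]
    _ = P * hInt 1 Δ (rungPerm π q) (rungPerm π q') * P := by rw [rungPerm_mul_Psym]

lemma Psym_hInt_Psym_eq_of_ne (twoJ L : ℕ) (Δ : ℝ) {x x' : Fin L} (hx : x ≠ x')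
    (j k k' : Fin twoJ) :
    Psym twoJ L * hInt 1 Δ (x, j) (x', k) * Psym twoJ L =
      Psym twoJ L * hInt 1 Δ (x, j) (x', k') * Psym twoJ L := by
  rw [Psym_hInt_Psym_eq_of_rungPerm twoJ L Δ (Pi.mulSingle x' (swap k k'))]
  simp [hx]

lemma Psym_hInt_Psym_eq_average (twoJ L : ℕ) (Δ : ℝ) {x x' : Fin L} (hx : x ≠ x')
    (j : Fin twoJ) :
    Psym twoJ L * hInt 1 Δ (x, j) (x', j) * Psym twoJ L =
      (twoJ : ℂ)⁻¹ • ∑ k, Psym twoJ L * hInt 1 Δ (x, j) (x', k) * Psym twoJ L := by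
  have htwoJ : (twoJ : ℂ) ≠ 0 := Nat.cast_ne_zero.mpr j.pos.ne'
  simp only [Psym_hInt_Psym_eq_of_ne twoJ L Δ hx j _ j, Finset.sum_const, Finset.card_univ,
    Fintype.card_fin, ← Nat.cast_smul_eq_nsmul ℂ, smul_smul, inv_mul_cancel₀ htwoJ, one_smul]

theorem compression_identity_general (twoJ L : ℕ) (Δ : ℝ) :
    Psym twoJ L * Hdec twoJ L Δ * Psym twoJ L =
      ((twoJ : ℂ))⁻¹ • (Psym twoJ L * Hladder twoJ L Δ * Psym twoJ L) := by
  simp only [Hdec, Hladder, Finset.mul_sum, Finset.sum_mul, Finset.smul_sum]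
  refine Finset.sum_congr rfl fun x _ => Finset.sum_congr rfl fun j _ => ?_
  split_ifs with h
  · rw [Psym_hInt_Psym_eq_average twoJ L Δ _ j, Finset.smul_sum]
    exact Fin.ne_of_val_ne (Nat.ne_add_one _)
  · simp

/-- The compression of the decoupled ladder Hamiltonian by the rung-symmetrization
projection equals `1/(2J)` times the compression of the full ladder Hamiltonian:
`P H̿ P = (1/(2J)) P H̃ P`. -/
theorem compression_identity (twoJ L : ℕ) (h2J : 1 ≤ twoJ) (hL : 2 ≤ L) (Δ : ℝ) (hΔ : 1 < Δ) :
    Psym twoJ L * Hdec twoJ L Δ * Psym twoJ L =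
      ((twoJ : ℂ))⁻¹ • (Psym twoJ L * Hladder twoJ L Δ * Psym twoJ L) :=
  compression_identity_general twoJ L Δ

end XXZ
end
end

section
/- The spectral gap of the spin-J XXZ chain in sector M admits the ladder representation γ([1,L],J,M) = 2J · inf { ⟨P_{[1,L]}ψ, H̿ P_{[1,L]}ψ⟩ / ⟨P_{[1,L]}ψ, P_{[1,L]}ψ⟩ : ψ ∈ ℋ(Λ̃,M), P_{[1,L]}ψ ≠ 0, ψ ⊥ 𝒢(Λ̃,M) }. -/
open scoped BigOperators Classical

noncomputable section

namespace XXZ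

/-!
The Dicke states give an isometry `W` from the spin-`J` chain onto the rung-symmetric subspace of
the ladder, `W Wᴴ = P_{[1,L]}`. On symmetric states the rung sums of the spin-`1/2` operators act
as the spin-`J` operators, so `H̃ W = W H^J` and `S³_tot W = W S³_tot`. Since `H̃` couples every leg
of a rung to every leg of the next and permuting the legs of a rung fixes the Dicke states,
`H^J = Wᴴ H̃ W = 2J · Wᴴ H̿ W`. Hence `χ ↦ W χ` turns the Rayleigh quotients of `H^J`, with their
sector and orthogonality constraints, into `2J` times those of `H̿` at `P ψ = W (Wᴴ ψ)`.
-/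

open Matrix Finset
open scoped Pointwise

section InnerProduct

variable {m n : Type*} [Fintype m] [Fintype n]

lemma ip_eq_star_dotProduct (x y : n → ℂ) : ip x y = star x ⬝ᵥ y := rfl

lemma ip_mulVec_right (A : Matrix n m ℂ) (x : n → ℂ) (y : m → ℂ) :
    ip x (A *ᵥ y) = ip (Aᴴ *ᵥ x) y := by
  simp only [ip_eq_star_dotProduct, dotProduct_mulVec, star_mulVec, conjTranspose_conjTranspose]

lemma ip_mulVec_left (A : Matrix n m ℂ) (x : m → ℂ) (y : n → ℂ) :
    ip (A *ᵥ x) y = ip x (Aᴴ *ᵥ y) := by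
  rw [ip_mulVec_right, conjTranspose_conjTranspose]

lemma ip_smul_right (c : ℂ) (x y : n → ℂ) : ip x (c • y) = c * ip x y := by
  simp only [ip_eq_star_dotProduct, dotProduct_smul, smul_eq_mul]

end InnerProduct

section Compression

lemma mulVec_mulVec_of_mul_eq {l m n k : Type*} [Fintype l] [Fintype n] [Fintype k]
    {A : Matrix m n ℂ} {W : Matrix n k ℂ} {V : Matrix m l ℂ} {B : Matrix l k ℂ}
    (h : A * W = V * B) (x : k → ℂ) : A *ᵥ (W *ᵥ x) = V *ᵥ (B *ᵥ x) := by
  rw [mulVec_mulVec, h, ← mulVec_mulVec]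

variable {m n : Type*} [Fintype m] [Fintype n]

lemma conjTranspose_mul_eq_of_mul_eq {A : Matrix m m ℂ} {B : Matrix n n ℂ} {W : Matrix m n ℂ}
    (hA : A.IsHermitian) (hB : B.IsHermitian) (h : A * W = W * B) : Wᴴ * A = B * Wᴴ := by
  simpa only [conjTranspose_mul, hA.eq, hB.eq] using congrArg conjTranspose h

lemma rayleigh_mulVec_of_isometry [DecidableEq n] {D : Matrix m m ℂ} {B : Matrix n n ℂ}
    {W : Matrix m n ℂ} (hW : Wᴴ * W = 1) {c : ℝ} (hD : (c : ℂ) • (Wᴴ * D * W) = B) (χ : n → ℂ) :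
    c * ((ip (W *ᵥ χ) (D *ᵥ (W *ᵥ χ))).re / (ip (W *ᵥ χ) (W *ᵥ χ)).re)
      = (ip χ (B *ᵥ χ)).re / (ip χ χ).re := by
  have hnorm : ip (W *ᵥ χ) (W *ᵥ χ) = ip χ χ := by
    rw [ip_mulVec_left, mulVec_mulVec, hW, one_mulVec]
  have henergy : c * (ip (W *ᵥ χ) (D *ᵥ (W *ᵥ χ))).re = (ip χ (B *ᵥ χ)).re := by
    rw [← hD, smul_mulVec, ip_smul_right, ip_mulVec_left, mulVec_mulVec, mulVec_mulVec,
      Complex.re_ofReal_mul]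
  rw [← mul_div_assoc, henergy, hnorm]

/-- `χ ↦ W χ` and `ψ ↦ Wᴴ ψ` match the two families, since `W Wᴴ ψ = W (Wᴴ ψ)` and the
intertwining relations carry eigenvectors and kernels of `A`, `S'` to those of `B`, `S` and back. -/
theorem rayleigh_set_eq_smul_of_isometry [DecidableEq n] {A S' D : Matrix m m ℂ}
    {B S : Matrix n n ℂ} {W : Matrix m n ℂ} (hW : Wᴴ * W = 1) (hA : A.IsHermitian)
    (hB : B.IsHermitian) (hS' : S'.IsHermitian) (hS : S.IsHermitian) (hAB : A * W = W * B)
    (hSS : S' * W = W * S) (c : ℝ) (hD : (c : ℂ) • (Wᴴ * D * W) = B) (μ : ℂ) :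
    { r : ℝ | ∃ χ : n → ℂ, χ ≠ 0 ∧ S *ᵥ χ = μ • χ ∧
        (∀ φ, B *ᵥ φ = 0 → S *ᵥ φ = μ • φ → ip φ χ = 0) ∧
        r = (ip χ (B *ᵥ χ)).re / (ip χ χ).re }
      = c • { r : ℝ | ∃ ψ : m → ℂ, S' *ᵥ ψ = μ • ψ ∧ (W * Wᴴ) *ᵥ ψ ≠ 0 ∧
        (∀ φ, A *ᵥ φ = 0 ∧ S' *ᵥ φ = μ • φ → ip φ ψ = 0) ∧
        r = (ip ((W * Wᴴ) *ᵥ ψ) (D *ᵥ ((W * Wᴴ) *ᵥ ψ))).re /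
            (ip ((W * Wᴴ) *ᵥ ψ) ((W * Wᴴ) *ᵥ ψ)).re } := by
  have hBA := conjTranspose_mul_eq_of_mul_eq hA hB hAB
  have hSS' := conjTranspose_mul_eq_of_mul_eq hS' hS hSS
  have hquot := rayleigh_mulVec_of_isometry hW hD
  have hWinj (χ : n → ℂ) (h : W *ᵥ χ = 0) : χ = 0 := by
    rw [← one_mulVec χ, ← hW, ← mulVec_mulVec, h, mulVec_zero]
  ext r
  simp only [Set.mem_smul_set, Set.mem_ofPred_eq, smul_eq_mul]
  constructor
  · rintro ⟨χ, hχ, hχS, hχorth, rfl⟩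
    have hP : (W * Wᴴ) *ᵥ (W *ᵥ χ) = W *ᵥ χ := by
      rw [mulVec_mulVec, Matrix.mul_assoc, hW, Matrix.mul_one]
    refine ⟨_, ⟨W *ᵥ χ, ?_, ?_, ?_, rfl⟩, ?_⟩
    · rw [mulVec_mulVec_of_mul_eq hSS, hχS, mulVec_smul]
    · rw [hP]
      exact fun h => hχ (hWinj χ h)
    · rintro φ ⟨hφA, hφS⟩
      rw [ip_mulVec_right]
      refine hχorth _ ?_ ?_
      · rw [← mulVec_mulVec_of_mul_eq hBA, hφA, mulVec_zero]
      · rw [← mulVec_mulVec_of_mul_eq hSS', hφS, mulVec_smul]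
    · rw [hP, hquot]
  · rintro ⟨_, ⟨ψ, hψS, hPψ, hψorth, rfl⟩, rfl⟩
    rw [← mulVec_mulVec] at hPψ ⊢
    refine ⟨Wᴴ *ᵥ ψ, fun h => hPψ (by rw [h, mulVec_zero]), ?_, ?_, hquot _⟩
    · rw [← mulVec_mulVec_of_mul_eq hSS', hψS, mulVec_smul]
    · intro φ hφB hφS
      have := hψorth (W *ᵥ φ) ⟨by rw [mulVec_mulVec_of_mul_eq hAB, hφB, mulVec_zero],
        by rw [mulVec_mulVec_of_mul_eq hSS, hφS, mulVec_smul]⟩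
      rwa [ip_mulVec_left] at this

end Compression

section OneSite

variable {ι : Type*} [Fintype ι] [DecidableEq ι] {d : ℕ}

lemma oneSite_apply (A : Matrix (Fin d) (Fin d) ℂ) (p : ι) (σ τ : ι → Fin d) :
    oneSite A p σ τ = if ∀ β, β ≠ p → σ β = τ β then A (σ p) (τ p) else 0 := by
  rw [oneSite, of_apply, prod_boole]
  simp only [mem_filter, mem_univ, true_and, mul_ite, mul_one, mul_zero]

lemma sum_agree_off_eq_sum_update (σ : ι → Fin d) (p : ι) (F : (ι → Fin d) → ℂ) :
    ∑ ρ : ι → Fin d, (if ∀ β, β ≠ p → ρ β = σ β then F ρ else 0)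
      = ∑ s : Fin d, F (Function.update σ p s) := by
  rw [← sum_filter]
  have hset : univ.filter (fun ρ : ι → Fin d => ∀ β, β ≠ p → ρ β = σ β)
      = univ.image (Function.update σ p) := by
    ext ρ
    simp only [mem_filter, mem_univ, true_and, mem_image]
    constructor
    · intro h
      exact ⟨ρ p, funext fun β => by
        rcases eq_or_ne β p with rfl | hβ
        · simp
        · rw [Function.update_of_ne hβ, h β hβ]⟩
    · rintro ⟨s, rfl⟩ β hβ
      exact Function.update_of_ne hβ _ _
  rw [hset, sum_image fun a _ b _ hab => by simpa using congrFun hab p]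

lemma oneSite_mul_apply {n : Type*} [Fintype n] (A : Matrix (Fin d) (Fin d) ℂ) (p : ι)
    (X : Matrix (ι → Fin d) n ℂ) (σ : ι → Fin d) (v : n) :
    (oneSite A p * X) σ v = ∑ s, A (σ p) s * X (Function.update σ p s) v := by
  rw [mul_apply]
  have := sum_agree_off_eq_sum_update σ p fun ρ => A (σ p) (ρ p) * X ρ v
  simp only [Function.update_self] at this
  rw [← this]
  refine sum_congr rfl fun ρ _ => ?_
  rw [oneSite_apply]
  by_cases h : ∀ β, β ≠ p → ρ β = σ β
  · rw [if_pos fun β hβ => (h β hβ).symm, if_pos h]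
  · rw [if_neg fun h' => h fun β hβ => (h' β hβ).symm, if_neg h, zero_mul]

lemma mul_oneSite_apply {n : Type*} [Fintype n] (A : Matrix (Fin d) (Fin d) ℂ) (p : ι)
    (X : Matrix n (ι → Fin d) ℂ) (u : n) (τ : ι → Fin d) :
    (X * oneSite A p) u τ = ∑ s, X u (Function.update τ p s) * A s (τ p) := by
  have := sum_agree_off_eq_sum_update τ p fun ρ => X u ρ * A (ρ p) (τ p)
  simp only [Function.update_self] at this
  rw [mul_apply, ← this]
  refine sum_congr rfl fun ρ _ => ?_
  rw [oneSite_apply]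
  split_ifs <;> simp

lemma oneSite_add (A B : Matrix (Fin d) (Fin d) ℂ) (p : ι) :
    oneSite (A + B) p = oneSite A p + oneSite B p := by
  ext σ τ
  simp [oneSite, add_mul]

lemma oneSite_sub (A B : Matrix (Fin d) (Fin d) ℂ) (p : ι) :
    oneSite (A - B) p = oneSite A p - oneSite B p := by
  ext σ τ
  simp [oneSite, sub_mul]

lemma oneSite_smul (c : ℂ) (A : Matrix (Fin d) (Fin d) ℂ) (p : ι) :
    oneSite (c • A) p = c • oneSite A p := by
  ext σ τ
  simp [oneSite, mul_assoc]

lemma oneSite_conjTranspose (A : Matrix (Fin d) (Fin d) ℂ) (p : ι) :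
    (oneSite A p)ᴴ = oneSite Aᴴ p := by
  ext σ τ
  simp only [conjTranspose_apply, oneSite_apply, eq_comm (a := σ _)]
  split_ifs <;> simp

lemma isHermitian_oneSite {A : Matrix (Fin d) (Fin d) ℂ} (hA : A.IsHermitian) (p : ι) :
    (oneSite A p).IsHermitian := by
  rw [IsHermitian, oneSite_conjTranspose, hA.eq]

lemma oneSite_mul_oneSite_apply (A B : Matrix (Fin d) (Fin d) ℂ) {p q : ι} (hpq : p ≠ q)
    (σ τ : ι → Fin d) :
    (oneSite A p * oneSite B q) σ τ = if ∀ β, β ≠ p → β ≠ q → σ β = τ β then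
      A (σ p) (τ p) * B (σ q) (τ q) else 0 := by
  rw [oneSite_mul_apply, sum_eq_single (τ p)]
  · simp only [oneSite_apply, Function.update_of_ne hpq.symm]
    by_cases h : ∀ β, β ≠ p → β ≠ q → σ β = τ β
    · rw [if_pos h, if_pos fun β hβ => ?_]
      rcases eq_or_ne β p with rfl | hβp
      · simp
      · rw [Function.update_of_ne hβp, h β hβp hβ]
    · rw [if_neg h, if_neg fun h' => h fun β hβp hβq => ?_, mul_zero]
      simpa [Function.update_of_ne hβp] using h' β hβq
  · intro s _ hs
    rw [oneSite_apply, if_neg fun h => hs (by simpa using h p hpq), mul_zero]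
  · simp

lemma oneSite_commute (A B : Matrix (Fin d) (Fin d) ℂ) {p q : ι} (hpq : p ≠ q) :
    Commute (oneSite A p) (oneSite B q) := by
  ext σ τ
  rw [oneSite_mul_oneSite_apply A B hpq, oneSite_mul_oneSite_apply B A hpq.symm, mul_comm]
  simp only [forall_comm (α := _ ≠ p)]

end OneSite

section SpinMatrices

variable (twoJ : ℕ)

lemma Splus_conjTranspose : (Splus twoJ)ᴴ = Sminus twoJ := by
  ext k k'
  rw [conjTranspose_apply, Splus, Sminus, of_apply, of_apply]
  by_cases h : (k' : ℕ) = k + 1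
  · have hk' : (k' : ℝ) = k + 1 := by exact_mod_cast h
    rw [if_pos h, if_pos h.symm, Complex.star_def, Complex.conj_ofReal, mval, mval, hk']
    ring_nf
  · rw [if_neg h, if_neg fun h' => h h'.symm, star_zero]

lemma Sminus_conjTranspose : (Sminus twoJ)ᴴ = Splus twoJ := by
  rw [← Splus_conjTranspose, conjTranspose_conjTranspose]

lemma isHermitian_S3 : (S3 twoJ).IsHermitian :=
  isHermitian_diagonal_of_self_adjoint _ (funext fun _ => Complex.conj_ofReal _)

lemma isHermitian_S1 : (S1 twoJ).IsHermitian := by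
  simp [IsHermitian, S1, Splus_conjTranspose, Sminus_conjTranspose, add_comm]

lemma isHermitian_S2 : (S2 twoJ).IsHermitian := by
  have h : star (2 * Complex.I)⁻¹ = -(2 * Complex.I)⁻¹ := by simp
  rw [IsHermitian, S2, conjTranspose_smul, conjTranspose_sub, Splus_conjTranspose,
    Sminus_conjTranspose, h, neg_smul, ← smul_neg, neg_sub]

lemma Splus_apply (k' k : Fin (twoJ + 1)) :
    Splus twoJ k' k =
      if (k' : ℕ) = k + 1 then ((Real.sqrt (twoJ - k : ℕ) * Real.sqrt (k + 1) : ℝ) : ℂ) else 0 := by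
  rw [Splus, of_apply, ← Real.sqrt_mul (Nat.cast_nonneg _), Nat.cast_sub (Nat.le_of_lt_succ k.2)]
  split_ifs
  · rw [mval]
    ring_nf
  · rfl

lemma Sminus_apply (k' k : Fin (twoJ + 1)) :
    Sminus twoJ k' k =
      if (k' : ℕ) + 1 = k then ((Real.sqrt (twoJ - k' : ℕ) * Real.sqrt (k' + 1) : ℝ) : ℂ)
      else 0 := by
  rw [Sminus, of_apply, ← Real.sqrt_mul (Nat.cast_nonneg _), Nat.cast_sub (Nat.le_of_lt_succ k'.2)]
  split_ifs with h
  · rw [mval, ← h]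
    push_cast
    ring_nf
  · rfl

end SpinMatrices

section XXZForm

variable {κ κ' : Type*} [Fintype κ] [DecidableEq κ] [Fintype κ'] [DecidableEq κ']

/-- `hInt` with the spin operators of its two sites abstracted, so that rung sums of spin-`1/2`
couplings can be recognised as a spin-`J` coupling. -/
def xxzForm (J Δ : ℝ) (A₁ A₂ A₃ B₁ B₂ B₃ : Matrix κ κ ℂ) : Matrix κ κ ℂ :=
  ((J ^ 2 : ℝ) : ℂ) • 1 - A₃ * B₃ - ((Δ⁻¹ : ℝ) : ℂ) • (A₁ * B₁ + A₂ * B₂)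
    + ((J * Real.sqrt (1 - Δ⁻¹ ^ 2) : ℝ) : ℂ) • (A₃ - B₃)

lemma hInt_eq_xxzForm (twoJ : ℕ) (Δ : ℝ) {ι : Type*} [Fintype ι] [DecidableEq ι] (α β : ι) :
    hInt twoJ Δ α β = xxzForm ((twoJ : ℝ) / 2) Δ
      (oneSite (S1 twoJ) α) (oneSite (S2 twoJ) α) (oneSite (S3 twoJ) α)
      (oneSite (S1 twoJ) β) (oneSite (S2 twoJ) β) (oneSite (S3 twoJ) β) := rfl

lemma isHermitian_xxzForm (J Δ : ℝ) {A₁ A₂ A₃ B₁ B₂ B₃ : Matrix κ κ ℂ}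
    (hA₁ : A₁.IsHermitian) (hA₂ : A₂.IsHermitian) (hA₃ : A₃.IsHermitian)
    (hB₁ : B₁.IsHermitian) (hB₂ : B₂.IsHermitian) (hB₃ : B₃.IsHermitian)
    (h₁ : Commute A₁ B₁) (h₂ : Commute A₂ B₂) (h₃ : Commute A₃ B₃) :
    (xxzForm J Δ A₁ A₂ A₃ B₁ B₂ B₃).IsHermitian := by
  have hreal (r : ℝ) : IsSelfAdjoint (r : ℂ) := Complex.conj_ofReal r
  exact ((((isHermitian_one.smul (hreal _)).sub ((hA₃.commute_iff hB₃).mp h₃)).sub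
    ((((hA₁.commute_iff hB₁).mp h₁).add ((hA₂.commute_iff hB₂).mp h₂)).smul (hreal _))).add
    ((hA₃.sub hB₃).smul (hreal _)))

lemma xxzForm_mul_eq_mul_xxzForm (J Δ : ℝ) {A₁ A₂ A₃ B₁ B₂ B₃ : Matrix κ κ ℂ}
    {A₁' A₂' A₃' B₁' B₂' B₃' : Matrix κ' κ' ℂ} {W : Matrix κ κ' ℂ}
    (hA₁ : A₁ * W = W * A₁') (hA₂ : A₂ * W = W * A₂') (hA₃ : A₃ * W = W * A₃')
    (hB₁ : B₁ * W = W * B₁') (hB₂ : B₂ * W = W * B₂') (hB₃ : B₃ * W = W * B₃') :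
    xxzForm J Δ A₁ A₂ A₃ B₁ B₂ B₃ * W = W * xxzForm J Δ A₁' A₂' A₃' B₁' B₂' B₃' := by
  simp only [xxzForm, Matrix.add_mul, Matrix.sub_mul, Matrix.mul_add, Matrix.mul_sub,
    Matrix.smul_mul, Matrix.mul_smul, Matrix.one_mul, Matrix.mul_one, Matrix.mul_assoc, hB₁, hB₂,
    hB₃, hA₃]
  simp only [← Matrix.mul_assoc, hA₁, hA₂, hA₃]

lemma sum_sum_xxzForm {ι : Type*} [Fintype ι] (J Δ : ℝ) (A₁ A₂ A₃ B₁ B₂ B₃ : ι → Matrix κ κ ℂ) :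
    ∑ j, ∑ k, xxzForm J Δ (A₁ j) (A₂ j) (A₃ j) (B₁ k) (B₂ k) (B₃ k)
      = xxzForm (Fintype.card ι * J) Δ (∑ j, A₁ j) (∑ j, A₂ j) (∑ j, A₃ j)
          (∑ k, B₁ k) (∑ k, B₂ k) (∑ k, B₃ k) := by
  simp only [xxzForm, sum_add_distrib, sum_sub_distrib, ← smul_sum, sum_mul_sum, sum_const,
    card_univ, smul_sub, ← Nat.cast_smul_eq_nsmul ℂ, smul_smul]
  congr 2 <;> push_cast <;> ring_nf

end XXZForm

section Hamiltonians

variable {ι : Type*} [Fintype ι] [DecidableEq ι]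

lemma isHermitian_hInt (twoJ : ℕ) (Δ : ℝ) {α β : ι} (hαβ : α ≠ β) :
    (hInt twoJ Δ α β).IsHermitian := by
  rw [hInt_eq_xxzForm]
  exact isHermitian_xxzForm _ _ (isHermitian_oneSite (isHermitian_S1 _) _)
    (isHermitian_oneSite (isHermitian_S2 _) _) (isHermitian_oneSite (isHermitian_S3 _) _)
    (isHermitian_oneSite (isHermitian_S1 _) _) (isHermitian_oneSite (isHermitian_S2 _) _)
    (isHermitian_oneSite (isHermitian_S3 _) _) (oneSite_commute _ _ hαβ)
    (oneSite_commute _ _ hαβ) (oneSite_commute _ _ hαβ)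

lemma isHermitian_S3tot (twoJ : ℕ) : (S3tot twoJ (ι := ι)).IsHermitian :=
  isSelfAdjoint_sum _ fun α _ => isHermitian_oneSite (isHermitian_S3 twoJ) α

lemma ne_mk_val_add_one {L : ℕ} (x : Fin L) (h : (x : ℕ) + 1 < L) : x ≠ ⟨(x : ℕ) + 1, h⟩ :=
  fun hx => by simpa using congrArg Fin.val hx

lemma isHermitian_Hchain (twoJ L : ℕ) (Δ : ℝ) : (Hchain twoJ L Δ).IsHermitian := by
  refine isSelfAdjoint_sum _ fun x _ => ?_
  split_ifs with h
  · exact isHermitian_hInt twoJ Δ (ne_mk_val_add_one x h)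
  · exact isHermitian_zero

lemma isHermitian_Hladder (twoJ L : ℕ) (Δ : ℝ) : (Hladder twoJ L Δ).IsHermitian := by
  refine isSelfAdjoint_sum _ fun x _ => isSelfAdjoint_sum _ fun j _ =>
    isSelfAdjoint_sum _ fun k _ => ?_
  split_ifs with h
  · exact isHermitian_hInt 1 Δ fun hx => ne_mk_val_add_one x h (congrArg Prod.fst hx)
  · exact isHermitian_zero

end Hamiltonians

section RungSum

variable {twoJ L : ℕ}

variable (twoJ) in
def rungSum (A : Matrix (Fin (1 + 1)) (Fin (1 + 1)) ℂ) (α : Fin L) :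
    Matrix ((Fin L × Fin twoJ) → Fin (1 + 1)) ((Fin L × Fin twoJ) → Fin (1 + 1)) ℂ :=
  ∑ j, oneSite A (α, j)

lemma sum_sum_hInt_eq_xxzForm (Δ : ℝ) (x y : Fin L) :
    ∑ j : Fin twoJ, ∑ k : Fin twoJ, hInt 1 Δ (x, j) (y, k)
      = xxzForm ((twoJ : ℝ) / 2) Δ (rungSum twoJ (S1 1) x) (rungSum twoJ (S2 1) x)
          (rungSum twoJ (S3 1) x) (rungSum twoJ (S1 1) y) (rungSum twoJ (S2 1) y)
          (rungSum twoJ (S3 1) y) := by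
  simp only [hInt_eq_xxzForm, sum_sum_xxzForm, Fintype.card_fin, Nat.cast_one]
  rw [mul_one_div]
  rfl

lemma rungSum_add (A B : Matrix (Fin (1 + 1)) (Fin (1 + 1)) ℂ) (α : Fin L) :
    rungSum twoJ (A + B) α = rungSum twoJ A α + rungSum twoJ B α := by
  simp only [rungSum, oneSite_add, sum_add_distrib]

lemma rungSum_sub (A B : Matrix (Fin (1 + 1)) (Fin (1 + 1)) ℂ) (α : Fin L) :
    rungSum twoJ (A - B) α = rungSum twoJ A α - rungSum twoJ B α := by
  simp only [rungSum, oneSite_sub, sum_sub_distrib]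

lemma rungSum_smul (c : ℂ) (A : Matrix (Fin (1 + 1)) (Fin (1 + 1)) ℂ) (α : Fin L) :
    rungSum twoJ (c • A) α = c • rungSum twoJ A α := by
  simp only [rungSum, oneSite_smul, smul_sum]

end RungSum

section Dicke

variable {twoJ L : ℕ}

def rungCount (τ : Fin L × Fin twoJ → Fin (1 + 1)) (α : Fin L) : ℕ := #{j | τ (α, j) = 1}

def dickeWeight (v : Fin L → Fin (twoJ + 1)) : ℝ := ∏ α, (Real.sqrt (twoJ.choose (v α)))⁻¹

variable (twoJ L) in
/-- Column `v` is the tensor product over the rungs of the normalized symmetric (Dicke) state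
with `v α` up spins on rung `α`, the image of the spin-`J` state `|m⟩`, `m = v α - J`. -/
def dicke : Matrix (Fin L × Fin twoJ → Fin (1 + 1)) (Fin L → Fin (twoJ + 1)) ℂ :=
  of fun τ v => if ∀ α, rungCount τ α = v α then (dickeWeight v : ℂ) else 0

lemma fin_two_eq_zero_iff : ∀ s : Fin (1 + 1), s = 0 ↔ ¬ s = 1 := by decide

lemma rungCount_le (τ : Fin L × Fin twoJ → Fin (1 + 1)) (α : Fin L) : rungCount τ α ≤ twoJ :=
  (card_filter_le _ _).trans_eq (card_fin twoJ)

lemma rungCount_update_of_ne (τ : Fin L × Fin twoJ → Fin (1 + 1)) {α β : Fin L} (j : Fin twoJ)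
    (s : Fin (1 + 1)) (h : β ≠ α) :
    rungCount (Function.update τ (α, j) s) β = rungCount τ β := by
  simp only [rungCount,
    Function.update_of_ne (fun he : (β, _) = (α, j) => h (congrArg Prod.fst he))]

lemma rungCount_update_zero_add_one (τ : Fin L × Fin twoJ → Fin (1 + 1)) (α : Fin L)
    (j : Fin twoJ) (h : τ (α, j) = 1) :
    rungCount (Function.update τ (α, j) 0) α + 1 = rungCount τ α := by
  have hset : ({j' | Function.update τ (α, j) 0 (α, j') = 1} : Finset (Fin twoJ))
      = ({j' | τ (α, j') = 1} : Finset _).erase j := by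
    ext j'
    rcases eq_or_ne j' j with rfl | hj
    · simp
    · simp [hj]
  rw [rungCount, hset, card_erase_add_one (by simpa using h), rungCount]

lemma rungCount_update_one (τ : Fin L × Fin twoJ → Fin (1 + 1)) (α : Fin L) (j : Fin twoJ)
    (h : τ (α, j) = 0) :
    rungCount (Function.update τ (α, j) 1) α = rungCount τ α + 1 := by
  have hset : ({j' | Function.update τ (α, j) 1 (α, j') = 1} : Finset (Fin twoJ))
      = insert j ({j' | τ (α, j') = 1} : Finset _) := by
    ext j'
    rcases eq_or_ne j' j with rfl | hj
    · simp
    · simp [hj]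
  rw [rungCount, hset, card_insert_of_notMem (by simp [h]), rungCount]

lemma card_filter_eq_zero (τ : Fin L × Fin twoJ → Fin (1 + 1)) (α : Fin L) :
    #{j | τ (α, j) = 0} = twoJ - rungCount τ α := by
  simp only [fin_two_eq_zero_iff, rungCount]
  rw [filter_not, card_sdiff_of_subset (filter_subset _ _), card_univ, Fintype.card_fin]

lemma dicke_apply (τ : Fin L × Fin twoJ → Fin (1 + 1)) (v : Fin L → Fin (twoJ + 1)) :
    dicke twoJ L τ v = if ∀ α, rungCount τ α = v α then (dickeWeight v : ℂ) else 0 := rfl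

lemma star_dicke_apply (τ : Fin L × Fin twoJ → Fin (1 + 1)) (v : Fin L → Fin (twoJ + 1)) :
    star (dicke twoJ L τ v) = dicke twoJ L τ v := by
  rw [dicke_apply]
  split_ifs
  · exact Complex.conj_ofReal _
  · exact star_zero _

end Dicke

section Intertwining

variable {twoJ L : ℕ}

lemma forall_rungCount_eq_update_iff (τ : Fin L × Fin twoJ → Fin (1 + 1))
    (v : Fin L → Fin (twoJ + 1)) (α : Fin L) (s : Fin (twoJ + 1)) :
    (∀ β, rungCount τ β = Function.update v α s β) ↔
      (∀ β, β ≠ α → rungCount τ β = v β) ∧ rungCount τ α = s := by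
  refine ⟨fun h => ⟨fun β hβ => by simpa [hβ] using h β, by simpa using h α⟩, ?_⟩
  rintro ⟨hne, hα⟩ β
  rcases eq_or_ne β α with rfl | hβ
  · simpa using hα
  · simpa [hβ] using hne β hβ

lemma forall_rungCount_update_zero_iff {τ : Fin L × Fin twoJ → Fin (1 + 1)} {α : Fin L}
    {j : Fin twoJ} (h : τ (α, j) = 1) (v : Fin L → Fin (twoJ + 1)) :
    (∀ β, rungCount (Function.update τ (α, j) 0) β = v β) ↔
      (∀ β, β ≠ α → rungCount τ β = v β) ∧ rungCount τ α = v α + 1 := by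
  have hα := rungCount_update_zero_add_one τ α j h
  refine ⟨fun hv => ⟨fun β hβ => ?_, by rw [← hα, hv α]⟩, fun ⟨hne, hα'⟩ β => ?_⟩
  · rw [← hv β, rungCount_update_of_ne τ j 0 hβ]
  · rcases eq_or_ne β α with rfl | hβ
    · omega
    · rw [rungCount_update_of_ne τ j 0 hβ, hne β hβ]

lemma forall_rungCount_update_one_iff {τ : Fin L × Fin twoJ → Fin (1 + 1)} {α : Fin L}
    {j : Fin twoJ} (h : τ (α, j) = 0) (v : Fin L → Fin (twoJ + 1)) :
    (∀ β, rungCount (Function.update τ (α, j) 1) β = v β) ↔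
      (∀ β, β ≠ α → rungCount τ β = v β) ∧ rungCount τ α + 1 = v α := by
  have hα := rungCount_update_one τ α j h
  refine ⟨fun hv => ⟨fun β hβ => ?_, by rw [← hα, hv α]⟩, fun ⟨hne, hα'⟩ β => ?_⟩
  · rw [← hv β, rungCount_update_of_ne τ j 1 hβ]
  · rcases eq_or_ne β α with rfl | hβ
    · omega
    · rw [rungCount_update_of_ne τ j 1 hβ, hne β hβ]

lemma sqrt_succ_mul_sqrt_choose_succ (n k : ℕ) :
    Real.sqrt (k + 1) * Real.sqrt (n.choose (k + 1))
      = Real.sqrt (n - k : ℕ) * Real.sqrt (n.choose k) := by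
  rw [← Real.sqrt_mul (by positivity), ← Real.sqrt_mul (by positivity), mul_comm,
    mul_comm ((n - k : ℕ) : ℝ)]
  exact_mod_cast congrArg Real.sqrt (congrArg (Nat.cast (R := ℝ)) (Nat.choose_succ_right_eq n k))

lemma sqrt_choose_pos (s : Fin (twoJ + 1)) : 0 < Real.sqrt (twoJ.choose s) :=
  Real.sqrt_pos.mpr (by exact_mod_cast Nat.choose_pos (Nat.le_of_lt_succ s.2))

lemma dickeWeight_update_mul (v : Fin L → Fin (twoJ + 1)) (α : Fin L) (s : Fin (twoJ + 1)) :
    dickeWeight (Function.update v α s) * Real.sqrt (twoJ.choose s)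
      = dickeWeight v * Real.sqrt (twoJ.choose (v α)) := by
  have hsplit (w : Fin L → Fin (twoJ + 1)) : dickeWeight w * Real.sqrt (twoJ.choose (w α))
      = ∏ β ∈ univ.erase α, (Real.sqrt (twoJ.choose (w β)))⁻¹ := by
    rw [dickeWeight, ← mul_prod_erase univ _ (mem_univ α), mul_comm,
      mul_inv_cancel_left₀ (sqrt_choose_pos _).ne']
  have h := hsplit (Function.update v α s)
  rw [Function.update_self] at h
  rw [h, hsplit]
  exact prod_congr rfl fun β hβ => by rw [Function.update_of_ne (ne_of_mem_erase hβ)]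

lemma rungSum_S3_mul_dicke (α : Fin L) :
    rungSum twoJ (S3 1) α * dicke twoJ L = dicke twoJ L * oneSite (S3 twoJ) α := by
  have hdiag (n : ℕ) (a s : Fin (n + 1)) : S3 n a s = if a = s then (mval n a : ℂ) else 0 :=
    diagonal_apply _ _ _
  have hval (a : Fin (1 + 1)) : mval 1 a = (if a = 1 then 1 else 0) - 1 / 2 := by
    fin_cases a <;> norm_num [mval]
  ext τ v
  simp only [rungSum, Matrix.sum_mul, Matrix.sum_apply, oneSite_mul_apply, mul_oneSite_apply, hdiag,
    ite_mul, mul_ite, zero_mul, mul_zero, sum_ite_eq, sum_ite_eq', mem_univ, if_true,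
    Function.update_eq_self, ← sum_mul]
  have hsum : ∑ j, mval 1 (τ (α, j)) = rungCount τ α - (twoJ : ℝ) / 2 := by
    simp only [hval, sum_sub_distrib, sum_boole, sum_const, card_univ, Fintype.card_fin,
      nsmul_eq_mul, rungCount]
    ring
  rw [← Complex.ofReal_sum, hsum, mul_comm, dicke_apply]
  split_ifs with h
  · rw [h α, mval]
  · rw [zero_mul, zero_mul]

lemma Splus_one_apply (a b : Fin (1 + 1)) : Splus 1 a b = if a = 1 ∧ b = 0 then 1 else 0 := by
  fin_cases a <;> fin_cases b <;> norm_num [Splus, mval]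

lemma Sminus_one_apply (a b : Fin (1 + 1)) : Sminus 1 a b = if a = 0 ∧ b = 1 then 1 else 0 := by
  fin_cases a <;> fin_cases b <;> norm_num [Sminus, mval]

lemma rungSum_Splus_mul_dicke_apply (α : Fin L) (τ : Fin L × Fin twoJ → Fin (1 + 1))
    (v : Fin L → Fin (twoJ + 1)) :
    (rungSum twoJ (Splus 1) α * dicke twoJ L) τ v =
      if (∀ β, β ≠ α → rungCount τ β = v β) ∧ rungCount τ α = v α + 1 then
        ((((v α : ℕ) + 1 : ℝ) * dickeWeight v : ℝ) : ℂ) else 0 := by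
  have hterm (j : Fin twoJ) : (oneSite (Splus 1) (α, j) * dicke twoJ L) τ v =
      if τ (α, j) = 1 then (if (∀ β, β ≠ α → rungCount τ β = v β) ∧ rungCount τ α = v α + 1
        then (dickeWeight v : ℂ) else 0) else 0 := by
    rw [oneSite_mul_apply, Fin.sum_univ_two]
    by_cases hj : τ (α, j) = 1
    · simp [Splus_one_apply, hj, dicke_apply, forall_rungCount_update_zero_iff hj]
    · simp [Splus_one_apply, hj]
  simp only [rungSum, Matrix.sum_mul, Matrix.sum_apply, hterm]
  rw [sum_ite, sum_const_zero, add_zero, sum_const, ← rungCount, nsmul_eq_mul]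
  split_ifs with h
  · rw [h.2]
    push_cast
    rfl
  · rw [mul_zero]

lemma dicke_mul_oneSite_Splus_apply (α : Fin L) (τ : Fin L × Fin twoJ → Fin (1 + 1))
    (v : Fin L → Fin (twoJ + 1)) :
    (dicke twoJ L * oneSite (Splus twoJ) α) τ v =
      if h : (∀ β, β ≠ α → rungCount τ β = v β) ∧ rungCount τ α = v α + 1 then
        ((dickeWeight (Function.update v α ⟨v α + 1, h.2 ▸ Nat.lt_succ_of_le (rungCount_le τ α)⟩) *
          (Real.sqrt (twoJ - v α : ℕ) * Real.sqrt (v α + 1)) : ℝ) : ℂ) else 0 := by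
  rw [mul_oneSite_apply]
  split_ifs with h
  · rw [sum_eq_single ⟨v α + 1, h.2 ▸ Nat.lt_succ_of_le (rungCount_le τ α)⟩]
    · rw [dicke_apply, if_pos ((forall_rungCount_eq_update_iff τ v α _).mpr h), Splus_apply,
        if_pos rfl]
      push_cast
      rfl
    · intro s _ hs
      rw [Splus_apply, if_neg fun h' => hs (Fin.ext h'), mul_zero]
    · simp
  · refine sum_eq_zero fun s _ => ?_
    rw [Splus_apply]
    split_ifs with hs
    · rw [dicke_apply, if_neg fun h' => h ?_, zero_mul]
      rw [← hs]
      exact (forall_rungCount_eq_update_iff τ v α s).mp h'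
    · rw [mul_zero]

lemma succ_mul_dickeWeight (v : Fin L → Fin (twoJ + 1)) (α : Fin L) (hk : (v α : ℕ) < twoJ) :
    ((v α : ℕ) + 1 : ℝ) * dickeWeight v
      = dickeWeight (Function.update v α ⟨v α + 1, Nat.succ_lt_succ hk⟩) *
          (Real.sqrt (twoJ - v α : ℕ) * Real.sqrt (v α + 1)) := by
  have hupd := dickeWeight_update_mul v α ⟨v α + 1, Nat.succ_lt_succ hk⟩
  have hsqrt := sqrt_succ_mul_sqrt_choose_succ twoJ (v α)
  have hsq := Real.mul_self_sqrt (by positivity : (0 : ℝ) ≤ (v α : ℕ) + 1)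
  refine mul_right_cancel₀ (sqrt_choose_pos ⟨v α + 1, Nat.succ_lt_succ hk⟩).ne' ?_
  dsimp only at hupd ⊢
  linear_combination (dickeWeight v * Real.sqrt ((v α : ℕ) + 1)) * hsqrt
    - (Real.sqrt (twoJ - v α : ℕ) * Real.sqrt ((v α : ℕ) + 1)) * hupd
    - (dickeWeight v * Real.sqrt (twoJ.choose ((v α : ℕ) + 1))) * hsq

lemma sub_mul_dickeWeight (v : Fin L → Fin (twoJ + 1)) (α : Fin L) {k : ℕ}
    (hk : (v α : ℕ) = k + 1) :
    ((twoJ - k : ℕ) : ℝ) * dickeWeight v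
      = dickeWeight (Function.update v α ⟨k, by have := (v α).2; omega⟩) *
          (Real.sqrt (twoJ - k : ℕ) * Real.sqrt (k + 1)) := by
  have hupd := dickeWeight_update_mul v α ⟨k, by have := (v α).2; omega⟩
  have hsqrt := sqrt_succ_mul_sqrt_choose_succ twoJ k
  have hsq := Real.mul_self_sqrt (Nat.cast_nonneg (α := ℝ) (twoJ - k))
  simp only [hk] at hupd
  refine mul_right_cancel₀ (sqrt_choose_pos (twoJ := twoJ) ⟨k, by have := (v α).2; omega⟩).ne' ?_
  dsimp only at hupd ⊢
  linear_combination -(dickeWeight v * Real.sqrt (twoJ - k : ℕ)) * hsqrt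
    - (Real.sqrt (twoJ - k : ℕ) * Real.sqrt (k + 1)) * hupd
    - (dickeWeight v * Real.sqrt (twoJ.choose k)) * hsq

lemma rungSum_Splus_mul_dicke (α : Fin L) :
    rungSum twoJ (Splus 1) α * dicke twoJ L = dicke twoJ L * oneSite (Splus twoJ) α := by
  ext τ v
  rw [rungSum_Splus_mul_dicke_apply, dicke_mul_oneSite_Splus_apply]
  split_ifs with h
  · rw [succ_mul_dickeWeight v α (by have := rungCount_le τ α; omega)]
  · rfl

lemma rungSum_Sminus_mul_dicke_apply (α : Fin L) (τ : Fin L × Fin twoJ → Fin (1 + 1))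
    (v : Fin L → Fin (twoJ + 1)) :
    (rungSum twoJ (Sminus 1) α * dicke twoJ L) τ v =
      if (∀ β, β ≠ α → rungCount τ β = v β) ∧ rungCount τ α + 1 = v α then
        ((((twoJ - rungCount τ α : ℕ) : ℝ) * dickeWeight v : ℝ) : ℂ) else 0 := by
  have hterm (j : Fin twoJ) : (oneSite (Sminus 1) (α, j) * dicke twoJ L) τ v =
      if τ (α, j) = 0 then (if (∀ β, β ≠ α → rungCount τ β = v β) ∧ rungCount τ α + 1 = v α
        then (dickeWeight v : ℂ) else 0) else 0 := by
    rw [oneSite_mul_apply, Fin.sum_univ_two]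
    by_cases hj : τ (α, j) = 0
    · simp [Sminus_one_apply, hj, dicke_apply, forall_rungCount_update_one_iff hj]
    · simp [Sminus_one_apply, hj]
  simp only [rungSum, Matrix.sum_mul, Matrix.sum_apply, hterm]
  rw [sum_ite, sum_const_zero, add_zero, sum_const, card_filter_eq_zero, nsmul_eq_mul]
  split_ifs with h
  · push_cast
    rfl
  · rw [mul_zero]

lemma dicke_mul_oneSite_Sminus_apply (α : Fin L) (τ : Fin L × Fin twoJ → Fin (1 + 1))
    (v : Fin L → Fin (twoJ + 1)) :
    (dicke twoJ L * oneSite (Sminus twoJ) α) τ v =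
      if h : (∀ β, β ≠ α → rungCount τ β = v β) ∧ rungCount τ α + 1 = v α then
        ((dickeWeight (Function.update v α ⟨rungCount τ α, by omega⟩) *
          (Real.sqrt (twoJ - rungCount τ α : ℕ) * Real.sqrt (rungCount τ α + 1)) : ℝ) : ℂ)
      else 0 := by
  rw [mul_oneSite_apply]
  split_ifs with h
  · rw [sum_eq_single ⟨rungCount τ α, by omega⟩]
    · rw [dicke_apply, if_pos ((forall_rungCount_eq_update_iff τ v α _).mpr ⟨h.1, rfl⟩),
        Sminus_apply, if_pos h.2]
      push_cast
      rfl
    · intro s _ hs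
      rw [Sminus_apply, if_neg fun h' => hs (Fin.ext (by simp; omega)), mul_zero]
    · simp
  · refine sum_eq_zero fun s _ => ?_
    rw [Sminus_apply]
    split_ifs with hs
    · rw [dicke_apply, if_neg fun h' => h ?_, zero_mul]
      have := (forall_rungCount_eq_update_iff τ v α s).mp h'
      exact ⟨this.1, by omega⟩
    · rw [mul_zero]

lemma rungSum_Sminus_mul_dicke (α : Fin L) :
    rungSum twoJ (Sminus 1) α * dicke twoJ L = dicke twoJ L * oneSite (Sminus twoJ) α := by
  ext τ v
  rw [rungSum_Sminus_mul_dicke_apply, dicke_mul_oneSite_Sminus_apply]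
  split_ifs with h
  · rw [sub_mul_dickeWeight v α h.2.symm]
  · rfl

lemma rungSum_S1_mul_dicke (α : Fin L) :
    rungSum twoJ (S1 1) α * dicke twoJ L = dicke twoJ L * oneSite (S1 twoJ) α := by
  rw [S1, S1, rungSum_smul, rungSum_add, oneSite_smul, oneSite_add, Matrix.smul_mul,
    Matrix.add_mul, rungSum_Splus_mul_dicke, rungSum_Sminus_mul_dicke, ← Matrix.mul_add,
    Matrix.mul_smul]

lemma rungSum_S2_mul_dicke (α : Fin L) :
    rungSum twoJ (S2 1) α * dicke twoJ L = dicke twoJ L * oneSite (S2 twoJ) α := by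
  rw [S2, S2, rungSum_smul, rungSum_sub, oneSite_smul, oneSite_sub, Matrix.smul_mul,
    Matrix.sub_mul, rungSum_Splus_mul_dicke, rungSum_Sminus_mul_dicke, ← Matrix.mul_sub,
    Matrix.mul_smul]

lemma Hladder_mul_dicke (Δ : ℝ) :
    Hladder twoJ L Δ * dicke twoJ L = dicke twoJ L * Hchain twoJ L Δ := by
  rw [Hladder, Hchain, Matrix.sum_mul, Matrix.mul_sum]
  refine sum_congr rfl fun x _ => ?_
  split_ifs with h
  · rw [sum_sum_hInt_eq_xxzForm, hInt_eq_xxzForm]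
    exact xxzForm_mul_eq_mul_xxzForm _ _ (rungSum_S1_mul_dicke _) (rungSum_S2_mul_dicke _)
      (rungSum_S3_mul_dicke _) (rungSum_S1_mul_dicke _) (rungSum_S2_mul_dicke _)
      (rungSum_S3_mul_dicke _)
  · simp

lemma S3tot_mul_dicke :
    S3tot 1 (ι := Fin L × Fin twoJ) * dicke twoJ L = dicke twoJ L * S3tot twoJ (ι := Fin L) := by
  have hrungs : S3tot 1 = ∑ α, rungSum twoJ (S3 1) (L := L) α := Fintype.sum_prod_type _
  rw [hrungs, S3tot, Matrix.sum_mul, Matrix.mul_sum]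
  exact sum_congr rfl fun α _ => rungSum_S3_mul_dicke α

end Intertwining

section Isometry

variable {twoJ L : ℕ}

lemma card_filter_card_eq_choose (n k : ℕ) :
    #{f : Fin n → Fin (1 + 1) | #{j | f j = 1} = k} = n.choose k := by
  rw [← card_fin n, ← card_powersetCard, card_fin]
  refine card_nbij' (fun f => univ.filter fun j => f j = 1)
    (fun s j => if j ∈ s then 1 else 0) ?_ ?_ ?_ ?_
  · intro f hf
    simpa using hf
  · intro s hs
    rw [mem_coe, mem_powersetCard] at hs
    rw [mem_coe, mem_filter]
    refine ⟨mem_univ _, ?_⟩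
    convert hs.2
    ext j
    by_cases hj : j ∈ s <;> simp [hj]
  · intro f _
    funext j
    by_cases hj : f j = 1
    · simp [hj]
    · simp [(fin_two_eq_zero_iff _).mpr hj]
  · intro s _
    ext j
    by_cases hj : j ∈ s <;> simp [hj]

lemma card_rungCount_eq (v : Fin L → Fin (twoJ + 1)) :
    #{τ : Fin L × Fin twoJ → Fin (1 + 1) | ∀ α, rungCount τ α = v α}
      = ∏ α, twoJ.choose (v α) := by
  let e : {τ : Fin L × Fin twoJ → Fin (1 + 1) // ∀ α, rungCount τ α = v α}
      ≃ ∀ α, {f : Fin twoJ → Fin (1 + 1) // #{j | f j = 1} = v α} :=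
    (Equiv.subtypeEquiv (Equiv.curry _ _ _) fun _ => Iff.rfl).trans
      (Equiv.subtypePiEquivPi (p := fun α (f : Fin twoJ → Fin (1 + 1)) => #{j | f j = 1} = v α))
  rw [← Fintype.card_subtype, Fintype.card_congr e, Fintype.card_pi]
  exact prod_congr rfl fun α _ => by rw [Fintype.card_subtype, card_filter_card_eq_choose]

lemma dickeWeight_mul_self (v : Fin L → Fin (twoJ + 1)) :
    dickeWeight v * dickeWeight v = (∏ α, (twoJ.choose (v α) : ℝ))⁻¹ := by
  rw [dickeWeight, ← prod_mul_distrib, ← prod_inv_distrib]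
  exact prod_congr rfl fun α _ => by rw [← mul_inv, Real.mul_self_sqrt (Nat.cast_nonneg _)]

lemma conjTranspose_dicke_mul_dicke : (dicke twoJ L)ᴴ * dicke twoJ L = 1 := by
  ext v w
  simp only [mul_apply, conjTranspose_apply, star_dicke_apply]
  by_cases hvw : v = w
  · subst hvw
    simp only [dicke_apply, ite_mul, mul_ite, mul_zero, zero_mul, ← Complex.ofReal_mul,
      ← sum_filter, filter_filter, and_self, sum_const, card_rungCount_eq, dickeWeight_mul_self,
      one_apply_eq, nsmul_eq_mul]
    push_cast
    refine mul_inv_cancel₀ (prod_ne_zero_iff.mpr fun α _ => ?_)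
    exact_mod_cast (Nat.choose_pos (Nat.le_of_lt_succ (v α).2)).ne'
  · rw [one_apply_ne hvw]
    refine sum_eq_zero fun τ _ => ?_
    rw [dicke_apply, dicke_apply]
    split_ifs with hv hw
    · exact absurd (funext fun α => Fin.ext ((hv α).symm.trans (hw α))) hvw
    all_goals simp

end Isometry

section Projection

lemma card_fiber_eq_of_comp_eq {α ι : Type*} [Fintype α] [DecidableEq ι] {f g : α → ι}
    {ρ : Equiv.Perm α} (h : f ∘ ρ = g) (i : ι) :
    Fintype.card {a // f a = i} = Fintype.card {a // g a = i} :=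
  Fintype.card_congr (Equiv.subtypeEquiv ρ fun a => by rw [← h]; rfl).symm

/-- Permutations carrying `f` to `g` form a coset of the stabilizer of `f` as soon as one exists,
and one exists when the fibres have the same sizes. -/
lemma card_perm_comp_eq {α ι : Type*} [Fintype α] [DecidableEq α] [Fintype ι] [DecidableEq ι]
    (f g : α → ι) (h : ∀ i, Fintype.card {a // f a = i} = Fintype.card {a // g a = i}) :
    Fintype.card {ρ : Equiv.Perm α // f ∘ ρ = g}
      = ∏ i, (Fintype.card {a // f a = i}).factorial := by
  let ρ₀ : Equiv.Perm α := Equiv.ofFiberEquiv fun i => Fintype.equivOfCardEq (h i).symm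
  have hρ₀ : f ∘ ρ₀ = g := funext (Equiv.ofFiberEquiv_map _)
  rw [← DomMulAct.stabilizer_card f]
  refine Fintype.card_congr (Equiv.subtypeEquiv (Equiv.mulRight ρ₀⁻¹) fun ρ => ?_)
  simp only [← hρ₀, funext_iff, Function.comp_apply, Equiv.coe_mulRight, Equiv.Perm.coe_mul]
  exact ⟨fun hρ a => by simpa using hρ (ρ₀⁻¹ a), fun hρ a => by simpa using hρ (ρ₀ a)⟩

variable {twoJ L : ℕ}

lemma card_perm_rung (σ τ : Fin L × Fin twoJ → Fin (1 + 1)) (α : Fin L) :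
    #{ρ : Equiv.Perm (Fin twoJ) | ∀ j, τ (α, j) = σ (α, ρ j)} =
      if rungCount σ α = rungCount τ α then
        (rungCount σ α).factorial * (twoJ - rungCount σ α).factorial else 0 := by
  have hfiber (χ : Fin L × Fin twoJ → Fin (1 + 1)) :
      Fintype.card {j // χ (α, j) = 0} = twoJ - rungCount χ α ∧
        Fintype.card {j // χ (α, j) = 1} = rungCount χ α := by
    rw [Fintype.card_subtype, Fintype.card_subtype, card_filter_eq_zero, rungCount]
    exact ⟨rfl, rfl⟩
  have hcomp (ρ : Equiv.Perm (Fin twoJ)) :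
      (∀ j, τ (α, j) = σ (α, ρ j)) ↔ (fun j => σ (α, j)) ∘ ρ = fun j => τ (α, j) :=
    ⟨fun h => funext fun j => (h j).symm, fun h j => (congrFun h j).symm⟩
  simp only [hcomp, ← Fintype.card_subtype]
  split_ifs with h
  · rw [card_perm_comp_eq, Fin.prod_univ_two, (hfiber σ).1, (hfiber σ).2, mul_comm]
    intro i
    fin_cases i
    · simp only [Fin.zero_eta, (hfiber σ).1, (hfiber τ).1, h]
    · simp only [Fin.mk_one, (hfiber σ).2, (hfiber τ).2, h]
  · refine Fintype.card_eq_zero_iff.mpr ⟨fun ⟨ρ, hρ⟩ => h ?_⟩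
    rw [← (hfiber σ).2, ← (hfiber τ).2]
    exact card_fiber_eq_of_comp_eq hρ 1

lemma Psym_apply (σ τ : Fin L × Fin twoJ → Fin (1 + 1)) :
    Psym twoJ L σ τ = ((twoJ.factorial : ℂ) ^ L)⁻¹ *
      ∏ α, (#{ρ : Equiv.Perm (Fin twoJ) | ∀ j, τ (α, j) = σ (α, ρ j)} : ℂ) := by
  rw [Psym, Matrix.smul_apply, Matrix.sum_apply, smul_eq_mul]
  congr 1
  simp only [of_apply, natCast_card_filter, Fintype.prod_sum, Fintype.prod_boole, Prod.forall]
  exact sum_congr rfl fun _ _ => by congr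

lemma dicke_mul_conjTranspose_dicke_apply (σ τ : Fin L × Fin twoJ → Fin (1 + 1)) :
    (dicke twoJ L * (dicke twoJ L)ᴴ) σ τ =
      if ∀ α, rungCount σ α = rungCount τ α then
        (((∏ α, (twoJ.choose (rungCount σ α) : ℝ))⁻¹ : ℝ) : ℂ) else 0 := by
  let v₀ : Fin L → Fin (twoJ + 1) := fun α => ⟨rungCount σ α, Nat.lt_succ_of_le (rungCount_le σ α)⟩
  rw [mul_apply, sum_eq_single v₀]
  · have hw : dickeWeight v₀ * dickeWeight v₀ = (∏ α, (twoJ.choose (rungCount σ α) : ℝ))⁻¹ :=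
      dickeWeight_mul_self v₀
    rw [conjTranspose_apply, star_dicke_apply, dicke_apply, dicke_apply, if_pos fun _ => rfl,
      ← hw]
    split_ifs with h h' h'
    · push_cast
      rfl
    · exact absurd (fun α => (h α).symm) h'
    · exact absurd (fun α => (h' α).symm) h
    · rw [mul_zero]
  · intro v _ hv
    rw [dicke_apply, if_neg fun h => hv (funext fun α => Fin.ext (h α).symm), zero_mul]
  · simp

lemma dicke_mul_conjTranspose_dicke : dicke twoJ L * (dicke twoJ L)ᴴ = Psym twoJ L := by
  ext σ τ
  rw [dicke_mul_conjTranspose_dicke_apply, Psym_apply]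
  simp only [card_perm_rung, Nat.cast_ite, Nat.cast_zero, Fintype.prod_ite_zero]
  split_ifs with h
  · have hpow : (twoJ.factorial : ℂ) ^ L = ∏ _α : Fin L, (twoJ.factorial : ℂ) := by simp
    rw [hpow, Complex.ofReal_inv, Complex.ofReal_prod, ← prod_inv_distrib, ← prod_inv_distrib,
      ← prod_mul_distrib]
    refine prod_congr rfl fun α _ => ?_
    rw [Complex.ofReal_natCast, Nat.cast_choose ℂ (rungCount_le σ α)]
    push_cast
    field_simp
  · rw [mul_zero]

end Projection

section Relabelling

lemma oneSite_submatrix {ι : Type*} [Fintype ι] [DecidableEq ι] {d : ℕ}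
    (A : Matrix (Fin d) (Fin d) ℂ) (e : ι ≃ ι) (p : ι) :
    (oneSite A p).submatrix (e.symm.arrowCongr (Equiv.refl (Fin d)))
      (e.symm.arrowCongr (Equiv.refl (Fin d))) = oneSite A (e p) := by
  ext σ τ
  simp only [submatrix_apply, oneSite_apply, Equiv.arrowCongr_apply, Equiv.symm_symm,
    Equiv.coe_refl, Function.comp_apply]
  congr 1
  exact propext (e.forall_congr fun {β} => by simp [e.injective.ne_iff])

lemma xxzForm_submatrix {κ κ' : Type*} [Fintype κ] [DecidableEq κ] [Fintype κ']
    [DecidableEq κ'] (J Δ : ℝ) (A₁ A₂ A₃ B₁ B₂ B₃ : Matrix κ κ ℂ) (f : κ' ≃ κ) :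
    (xxzForm J Δ A₁ A₂ A₃ B₁ B₂ B₃).submatrix f f = xxzForm J Δ (A₁.submatrix f f)
      (A₂.submatrix f f) (A₃.submatrix f f) (B₁.submatrix f f) (B₂.submatrix f f)
      (B₃.submatrix f f) := by
  simp only [xxzForm, submatrix_add, submatrix_sub, submatrix_smul, Pi.add_apply, Pi.sub_apply,
    Pi.smul_apply, submatrix_one_equiv, submatrix_mul_equiv]

lemma hInt_submatrix {ι : Type*} [Fintype ι] [DecidableEq ι] (twoJ : ℕ) (Δ : ℝ) (e : ι ≃ ι)
    (p q : ι) :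
    (hInt twoJ Δ p q).submatrix (e.symm.arrowCongr (Equiv.refl _))
      (e.symm.arrowCongr (Equiv.refl _)) = hInt twoJ Δ (e p) (e q) := by
  simp only [hInt_eq_xxzForm, xxzForm_submatrix, oneSite_submatrix]

lemma conjTranspose_mul_submatrix_mul {m n : Type*} [Fintype m] [DecidableEq m] [Fintype n]
    {W : Matrix m n ℂ} {f : m ≃ m} (hW : W.submatrix f id = W) (X : Matrix m m ℂ) :
    Wᴴ * X.submatrix f f * W = Wᴴ * X * W := by
  have hW' : Wᴴ.submatrix id f = Wᴴ := by rw [← conjTranspose_submatrix, hW]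
  calc Wᴴ * X.submatrix f f * W
      = Wᴴ.submatrix id f * X.submatrix f f * W.submatrix f id := by rw [hW, hW']
    _ = Wᴴ * X * W := by rw [submatrix_mul_equiv, submatrix_mul_equiv, submatrix_id_id]

variable {twoJ L : ℕ}

lemma rungCount_comp_prodShear (π : Fin L → Equiv.Perm (Fin twoJ))
    (τ : Fin L × Fin twoJ → Fin (1 + 1)) (α : Fin L) :
    rungCount ((Equiv.prodShear (Equiv.refl _) π).symm.arrowCongr (Equiv.refl _) τ) α
      = rungCount τ α := by
  refine card_nbij' (π α) (π α).symm ?_ ?_ ?_ ?_ <;> intro j <;> simp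

lemma dicke_submatrix_prodShear (π : Fin L → Equiv.Perm (Fin twoJ)) :
    (dicke twoJ L).submatrix
      ((Equiv.prodShear (Equiv.refl _) π).symm.arrowCongr (Equiv.refl _)) id = dicke twoJ L := by
  ext τ v
  simp only [submatrix_apply, dicke_apply, id, rungCount_comp_prodShear]

/-- Relabelling the legs of the rung `x'` by the transposition of `j` and `k` fixes the Dicke
states and carries `h((x,j),(x',j))` to `h((x,j),(x',k))`. -/
lemma conjTranspose_dicke_mul_hInt_mul_dicke (Δ : ℝ) {x x' : Fin L} (hxx' : x ≠ x')
    (j k : Fin twoJ) :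
    (dicke twoJ L)ᴴ * hInt 1 Δ (x, j) (x', k) * dicke twoJ L
      = (dicke twoJ L)ᴴ * hInt 1 Δ (x, j) (x', j) * dicke twoJ L := by
  set π : Fin L → Equiv.Perm (Fin twoJ) := fun α => if α = x' then Equiv.swap j k else 1
  have hx : Equiv.prodShear (Equiv.refl _) π (x, j) = (x, j) := by simp [π, hxx']
  have hx' : Equiv.prodShear (Equiv.refl _) π (x', j) = (x', k) := by simp [π]
  have h := conjTranspose_mul_submatrix_mul (dicke_submatrix_prodShear π) (hInt 1 Δ (x, j) (x', j))
  rwa [hInt_submatrix, hx, hx'] at h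

lemma conjTranspose_dicke_mul_Hladder_mul_dicke (Δ : ℝ) :
    (dicke twoJ L)ᴴ * Hladder twoJ L Δ * dicke twoJ L
      = (twoJ : ℂ) • ((dicke twoJ L)ᴴ * Hdec twoJ L Δ * dicke twoJ L) := by
  simp only [Hladder, Hdec, Matrix.mul_sum, Matrix.sum_mul, smul_sum]
  refine sum_congr rfl fun x _ => sum_congr rfl fun j _ => ?_
  split_ifs with h
  · simp only [conjTranspose_dicke_mul_hInt_mul_dicke Δ (ne_mk_val_add_one x h), sum_const,
      card_univ, Fintype.card_fin, Nat.cast_smul_eq_nsmul]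
  · simp

end Relabelling

lemma conjTranspose_dicke_mul_Hdec_mul_dicke (twoJ L : ℕ) (Δ : ℝ) :
    ((twoJ : ℝ) : ℂ) • ((dicke twoJ L)ᴴ * Hdec twoJ L Δ * dicke twoJ L) = Hchain twoJ L Δ := by
  rw [Complex.ofReal_natCast, ← conjTranspose_dicke_mul_Hladder_mul_dicke, Matrix.mul_assoc,
    Hladder_mul_dicke, ← Matrix.mul_assoc, conjTranspose_dicke_mul_dicke, Matrix.one_mul]

theorem gap_ladder_representation_general (twoJ L : ℕ)
    (Δ : ℝ) (M : ℝ) :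
    gap twoJ L Δ M = (twoJ : ℝ) *
      sInf { r : ℝ | ∃ ψ : ((Fin L × Fin twoJ) → Fin (1 + 1)) → ℂ,
        inSector 1 M ψ ∧ (Psym twoJ L).mulVec ψ ≠ 0 ∧
        (∀ φ, inG twoJ L Δ M φ → ip φ ψ = 0) ∧
        r = (ip ((Psym twoJ L).mulVec ψ)
              ((Hdec twoJ L Δ).mulVec ((Psym twoJ L).mulVec ψ))).re /
            (ip ((Psym twoJ L).mulVec ψ) ((Psym twoJ L).mulVec ψ)).re } := by
  have hsets := rayleigh_set_eq_smul_of_isometry conjTranspose_dicke_mul_dicke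
    (isHermitian_Hladder twoJ L Δ) (isHermitian_Hchain twoJ L Δ) (isHermitian_S3tot 1)
    (isHermitian_S3tot twoJ) (Hladder_mul_dicke Δ) S3tot_mul_dicke twoJ
    (conjTranspose_dicke_mul_Hdec_mul_dicke twoJ L Δ) M
  rw [dicke_mul_conjTranspose_dicke] at hsets
  refine (congrArg sInf hsets).trans ?_
  rw [Real.sInf_smul_of_nonneg (Nat.cast_nonneg _), smul_eq_mul]
  rfl

/-- **Ladder representation of the spectral gap.**
`γ([1,L],J,M) = 2J · inf { ⟨Pψ, H̿ Pψ⟩/⟨Pψ,Pψ⟩ : ψ ∈ ℋ(Λ̃,M), Pψ ≠ 0, ψ ⊥ 𝒢(Λ̃,M) }`. -/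
theorem gap_ladder_representation (twoJ L : ℕ) (h2J : 1 ≤ twoJ) (hL : 2 ≤ L)
    (Δ : ℝ) (hΔ : 1 < Δ) (M : ℝ)
    (hM : ∃ k : ℕ, k ≤ twoJ * L ∧ M = (k : ℝ) - ((twoJ * L : ℕ) : ℝ) / 2) :
    gap twoJ L Δ M = (twoJ : ℝ) *
      sInf { r : ℝ | ∃ ψ : ((Fin L × Fin twoJ) → Fin (1 + 1)) → ℂ,
        inSector 1 M ψ ∧ (Psym twoJ L).mulVec ψ ≠ 0 ∧
        (∀ φ, inG twoJ L Δ M φ → ip φ ψ = 0) ∧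
        r = (ip ((Psym twoJ L).mulVec ψ)
              ((Hdec twoJ L Δ).mulVec ((Psym twoJ L).mulVec ψ))).re /
            (ip ((Psym twoJ L).mulVec ψ) ((Psym twoJ L).mulVec ψ)).re } :=
  gap_ladder_representation_general twoJ L Δ M

end XXZ
end
end

section
/- Fix q ∈ (0,1), a half-integer J, L ≥ 1 and N ∈ {0,…,2JL}. For m, n ∈ ℕ^{2J} with Σ_j m_j = Σ_j n_j = N, the vectors Ψ(m), Ψ(n) defined by Ψ(n) = Σ_{A : r_A = n} q^{Σ_x x·c_A(x)} φ_A satisfy ⟨Ψ(m), P Ψ(n)⟩ = Σ_{c ∈ {0,…,2J}^L, Σ_x c(x) = N} M_{m,c} M_{n,c} q^{2 Σ_x x·c(x)} Π_{x=1}^{L} binom(2J, c(x))^{−1}, where P = Π_{x=1}^{L} P_x and P_x is the orthogonal projection onto tensors symmetric under permutations of the rung {x}×[1,2J]. -/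
set_option maxHeartbeats 1000000


open scoped BigOperators Classical

noncomputable section

namespace XXZ

/-- Leg sums `r_A(j) = Σ_x A(x,j)` of a 0–1 array (configuration, 1 = down spin). -/
def rA {twoJ L : ℕ} (A : (Fin L × Fin twoJ) → Fin (1 + 1)) (j : Fin twoJ) : ℕ :=
  ∑ x : Fin L, (A (x, j) : ℕ)

/-- Rung sums `c_A(x) = Σ_j A(x,j)`. -/
def cA {twoJ L : ℕ} (A : (Fin L × Fin twoJ) → Fin (1 + 1)) (x : Fin L) : ℕ :=
  ∑ j : Fin twoJ, (A (x, j) : ℕ)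

/-- The number `M_{r,c}` of 0–1 arrays with leg sums `r` and rung sums `c`. -/
def Mcount (twoJ L : ℕ) (r : Fin twoJ → ℕ) (c : Fin L → ℕ) : ℕ :=
  (Finset.univ.filter (fun A : (Fin L × Fin twoJ) → Fin (1 + 1) =>
    (∀ j, rA A j = r j) ∧ (∀ x, cA A x = c x))).card

/-- The ground state `Ψ(n) = Σ_{A : r_A = n} q^{Σ_x x·c_A(x)} φ_A` of the decoupled ladder
with leg magnetizations given by `n`, expanded in the orthonormal basis `φ_A`. -/
def PsiVec (twoJ L : ℕ) (q : ℝ) (n : Fin twoJ → ℕ) :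
    ((Fin L × Fin twoJ) → Fin (1 + 1)) → ℂ :=
  fun A => if ∀ j, rA A j = n j then
    ((q ^ (∑ x : Fin L, ((x : ℕ) + 1) * cA A x) : ℝ) : ℂ) else 0

lemma fin2_le_one (a : Fin (1 + 1)) : (a : ℕ) ≤ 1 := Nat.lt_succ_iff.mp a.2

lemma card_equiv_eq (α β : Type*) [Fintype α] [Fintype β] [DecidableEq α] [DecidableEq β] :
    Fintype.card (α ≃ β) =
      if Fintype.card α = Fintype.card β then (Fintype.card α).factorial else 0 := by
  split_ifs with h
  · obtain ⟨e⟩ := Fintype.card_eq.mp h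
    exact Fintype.card_equiv e
  · have : IsEmpty (α ≃ β) := ⟨fun e => h (Fintype.card_congr e)⟩
    exact Fintype.card_eq_zero

lemma card_fiber_one {k : ℕ} (v : Fin k → Fin (1 + 1)) :
    Fintype.card {j // v j = 1} = ∑ j, (v j : ℕ) := by
  rw [Fintype.card_subtype, Finset.card_filter]
  apply Finset.sum_congr rfl
  intro j _
  have h2 : ((v j : ℕ)) < 2 := (v j).2
  by_cases h : v j = 1
  · rw [if_pos h, h]; rfl
  · rw [if_neg h]
    have h3 : (v j : ℕ) ≠ 1 := fun hh => h (Fin.ext hh)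
    omega

lemma sum_fin2_le {k : ℕ} (v : Fin k → Fin (1 + 1)) : ∑ j, (v j : ℕ) ≤ k := by
  calc ∑ j, (v j : ℕ) ≤ ∑ _j : Fin k, 1 := Finset.sum_le_sum fun j _ => fin2_le_one _
  _ = k := by simp

lemma card_fiber_zero {k : ℕ} (v : Fin k → Fin (1 + 1)) :
    Fintype.card {j // v j = 0} = k - ∑ j, (v j : ℕ) := by
  have h : (Finset.univ.filter (fun j => v j = 0)).card + ∑ j, (v j : ℕ) = k := by
    rw [Finset.card_filter, ← Finset.sum_add_distrib]
    have h1 : ∀ j ∈ Finset.univ, ((if v j = 0 then 1 else 0) + (v j : ℕ)) = 1 := by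
      intro j _
      have h2 : ((v j : ℕ)) < 2 := (v j).2
      by_cases h : v j = 0
      · rw [if_pos h, h]; rfl
      · rw [if_neg h]
        have h3 : (v j : ℕ) ≠ 0 := fun hh => h (Fin.ext hh)
        omega
    rw [Finset.sum_congr rfl h1]
    simp
  rw [Fintype.card_subtype]; omega

lemma perm_count {k : ℕ} (u v : Fin k → Fin (1 + 1)) :
    Fintype.card {ρ : Equiv.Perm (Fin k) // ∀ j, u (ρ j) = v j}
      = if (∑ j, (u j : ℕ)) = (∑ j, (v j : ℕ))
        then (∑ j, (v j : ℕ)).factorial * (k - ∑ j, (v j : ℕ)).factorial else 0 := by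
  have E : {ρ : Equiv.Perm (Fin k) // ∀ j, u (ρ j) = v j}
      ≃ ∀ i : Fin (1 + 1), ({j // v j = i} ≃ {j // u j = i}) :=
    { toFun := fun ρ i => Equiv.subtypeEquiv ρ.1 (fun j => by rw [ρ.2 j])
      invFun := fun E =>
        ⟨((Equiv.sigmaFiberEquiv v).symm.trans
            ((Equiv.sigmaCongrRight fun i => E i).trans (Equiv.sigmaFiberEquiv u))),
          fun j => (E (v j) ⟨j, rfl⟩).2⟩
      left_inv := fun ρ => Subtype.ext (Equiv.ext fun j => rfl)
      right_inv := fun E => funext fun i => Equiv.ext fun j => by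
        obtain ⟨j, hj⟩ := j
        subst hj
        rfl }
  rw [Fintype.card_congr E, Fintype.card_pi, Fin.prod_univ_two,
    card_equiv_eq, card_equiv_eq, card_fiber_zero, card_fiber_zero,
    card_fiber_one, card_fiber_one]
  have hu := sum_fin2_le u
  have hv := sum_fin2_le v
  split_ifs with h1 h2 h3 h3 <;> first
    | omega
    | (exact (mul_comm _ _))

lemma prod_ite_all {α : Type*} [Fintype α] (p : α → Prop) [DecidablePred p]
    [Decidable (∀ x, p x)] (f : α → ℕ) :
    (∏ x, if p x then f x else 0) = if (∀ x, p x) then ∏ x, f x else 0 := by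
  split_ifs with h
  · exact Finset.prod_congr rfl fun x _ => if_pos (h x)
  · push_neg at h; obtain ⟨x, hx⟩ := h
    exact Finset.prod_eq_zero (Finset.mem_univ x) (if_neg hx)

def act {twoJ L : ℕ} (π : Fin L → Equiv.Perm (Fin twoJ))
    (σ : (Fin L × Fin twoJ) → Fin (1 + 1)) : (Fin L × Fin twoJ) → Fin (1 + 1) :=
  fun p => σ (p.1, π p.1 p.2)

lemma cA_act {twoJ L : ℕ} (π : Fin L → Equiv.Perm (Fin twoJ))
    (σ : (Fin L × Fin twoJ) → Fin (1 + 1)) : cA (act π σ) = cA σ := by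
  funext x
  exact Equiv.sum_comp (π x) (fun j => (σ (x, j) : ℕ))

lemma card_act_eq {twoJ L : ℕ} (σ B : (Fin L × Fin twoJ) → Fin (1 + 1)) :
    (Finset.univ.filter (fun π : Fin L → Equiv.Perm (Fin twoJ) => act π σ = B)).card
      = if (∀ x, cA σ x = cA B x)
        then ∏ x : Fin L, (cA B x).factorial * (twoJ - cA B x).factorial else 0 := by
  rw [← Fintype.card_subtype]
  have E1 : {π : Fin L → Equiv.Perm (Fin twoJ) // act π σ = B}
      ≃ {π : Fin L → Equiv.Perm (Fin twoJ) // ∀ x, ∀ j, σ (x, (π x) j) = B (x, j)} := by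
    apply Equiv.subtypeEquivRight
    intro π
    rw [funext_iff]
    constructor
    · intro h x j; exact h (x, j)
    · intro h p; exact h p.1 p.2
  have h1 := Fintype.card_congr (E1.trans (@Equiv.subtypePiEquivPi (Fin L)
    (fun _ => Equiv.Perm (Fin twoJ)) (fun x ρ => ∀ j, σ (x, ρ j) = B (x, j))))
  rw [h1, Fintype.card_pi]
  have hx : ∀ x : Fin L, Fintype.card {ρ : Equiv.Perm (Fin twoJ) // ∀ j, σ (x, ρ j) = B (x, j)}
      = if cA σ x = cA B x then (cA B x).factorial * (twoJ - cA B x).factorial else 0 := by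
    intro x
    exact perm_count (fun j => σ (x, j)) (fun j => B (x, j))
  rw [Finset.prod_congr rfl (fun x _ => hx x), prod_ite_all]

lemma sum_pi_count {twoJ L : ℕ} (n : Fin twoJ → ℕ) (σ : (Fin L × Fin twoJ) → Fin (1 + 1)) :
    (Finset.univ.filter (fun π : Fin L → Equiv.Perm (Fin twoJ) =>
        ∀ j, rA (act π σ) j = n j)).card
      = Mcount twoJ L n (cA σ) * ∏ x : Fin L, (cA σ x).factorial * (twoJ - cA σ x).factorial := by
  rw [Finset.card_eq_sum_card_fiberwise
    (f := fun π => act π σ) (t := Finset.univ) (fun π _ => Finset.mem_univ _)]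
  rw [Finset.sum_congr rfl (fun B _ => by rw [Finset.filter_filter])]
  have key : ∀ B : (Fin L × Fin twoJ) → Fin (1 + 1),
      (Finset.univ.filter (fun π : Fin L → Equiv.Perm (Fin twoJ) =>
        (∀ j, rA (act π σ) j = n j) ∧ act π σ = B)).card
      = if ((∀ j, rA B j = n j) ∧ (∀ x, cA B x = cA σ x))
        then ∏ x : Fin L, (cA σ x).factorial * (twoJ - cA σ x).factorial else 0 := by
    intro B
    by_cases hB : ∀ j, rA B j = n j
    · have : (Finset.univ.filter (fun π : Fin L → Equiv.Perm (Fin twoJ) =>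
          (∀ j, rA (act π σ) j = n j) ∧ act π σ = B))
          = (Finset.univ.filter (fun π => act π σ = B)) := by
        apply Finset.filter_congr
        intro π _
        constructor
        · exact fun h => h.2
        · intro h; exact ⟨by rw [h]; exact hB, h⟩
      rw [this, card_act_eq]
      by_cases hc : ∀ x, cA B x = cA σ x
      · rw [if_pos (fun x => (hc x).symm), if_pos ⟨hB, hc⟩]
        exact Finset.prod_congr rfl fun x _ => by rw [hc x]
      · rw [if_neg, if_neg]
        · exact fun h => hc h.2
        · intro h; exact hc fun x => (h x).symm
    · rw [if_neg (fun h => hB h.1)]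
      rw [Finset.card_eq_zero, Finset.filter_eq_empty_iff]
      intro π _ h
      exact hB (by rw [← h.2]; exact h.1)
  rw [Finset.sum_congr rfl (fun B _ => key B)]
  rw [Finset.sum_ite, Finset.sum_const, Finset.sum_const_zero, add_zero, smul_eq_mul]
  unfold Mcount
  congr 1

lemma Mcount_eq_zero {twoJ L : ℕ} (n : Fin twoJ → ℕ) (c : Fin L → ℕ)
    (h : ∑ x, c x ≠ ∑ j, n j) : Mcount twoJ L n c = 0 := by
  unfold Mcount
  rw [Finset.card_eq_zero, Finset.filter_eq_empty_iff]
  intro A _ hA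
  apply h
  have : ∑ x, c x = ∑ x, cA A x := Finset.sum_congr rfl fun x _ => (hA.2 x).symm
  rw [this]
  have : ∑ j, n j = ∑ j, rA A j := Finset.sum_congr rfl fun j _ => (hA.1 j).symm
  rw [this]
  unfold cA rA
  exact Finset.sum_comm


/-- `⟨Ψ(m), P Ψ(n)⟩ = Σ_{c : Σ_x c(x) = N} M_{m,c} M_{n,c} q^{2 Σ_x x·c(x)}
Π_x binom(2J, c(x))^{-1}`, where `P` is the rung symmetrization. -/
theorem PsiVec_Psym_inner (q : ℝ) (hq0 : 0 < q) (hq1 : q < 1)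
    (twoJ L : ℕ) (h2J : 1 ≤ twoJ) (hL : 1 ≤ L)
    (N : ℕ) (hN : N ≤ twoJ * L) (m n : Fin twoJ → ℕ)
    (hm : ∑ j, m j = N) (hn : ∑ j, n j = N) :
    ip (PsiVec twoJ L q m) ((Psym twoJ L).mulVec (PsiVec twoJ L q n)) =
      ((∑ c : Fin L → Fin (twoJ + 1), if (∑ x, (c x : ℕ)) = N then
          (Mcount twoJ L m (fun x => (c x : ℕ)) : ℝ) *
            (Mcount twoJ L n (fun x => (c x : ℕ)) : ℝ) *
            q ^ (2 * ∑ x : Fin L, ((x : ℕ) + 1) * (c x : ℕ)) *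
            ∏ x : Fin L, ((Nat.choose twoJ (c x : ℕ) : ℝ))⁻¹
        else 0 : ℝ) : ℂ) := by
  classical
  set K : ℂ := ((Nat.factorial twoJ : ℂ) ^ L)⁻¹ with hK
  -- Step 1: mulVec formula
  have hmv : ∀ σ, (Psym twoJ L).mulVec (PsiVec twoJ L q n) σ
      = K * ∑ π : Fin L → Equiv.Perm (Fin twoJ), PsiVec twoJ L q n (act π σ) := by
    intro σ
    simp only [Matrix.mulVec, dotProduct, Psym, Matrix.smul_apply, Matrix.sum_apply,
      Matrix.of_apply, smul_eq_mul]
    have h1 : ∀ τ, (K * ∑ π : Fin L → Equiv.Perm (Fin twoJ),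
          (if (∀ p : Fin L × Fin twoJ, τ p = σ (p.1, (π p.1) p.2)) then (1:ℂ) else 0))
            * PsiVec twoJ L q n τ
        = K * ∑ π : Fin L → Equiv.Perm (Fin twoJ),
            (if τ = act π σ then (1:ℂ) else 0) * PsiVec twoJ L q n τ := by
      intro τ
      rw [mul_assoc, Finset.sum_mul]
      congr 1
      apply Finset.sum_congr rfl
      intro π _
      congr 1
      exact if_congr funext_iff.symm rfl rfl
    rw [Finset.sum_congr rfl (fun τ _ => h1 τ), ← Finset.mul_sum, Finset.sum_comm]
    congr 1
    apply Finset.sum_congr rfl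
    intro π _
    simp [ite_mul]
  -- Step 2/3: the double sum formula
  have key : ip (PsiVec twoJ L q m) ((Psym twoJ L).mulVec (PsiVec twoJ L q n))
      = K * ∑ σ : (Fin L × Fin twoJ) → Fin (1 + 1),
          (if (∀ j, rA σ j = m j)
            then ((q : ℂ) ^ (2 * ∑ x : Fin L, ((x : ℕ) + 1) * cA σ x)) else 0)
          * ((Mcount twoJ L n (cA σ)
              * ∏ x : Fin L, (cA σ x).factorial * (twoJ - cA σ x).factorial : ℕ) : ℂ) := by
    unfold ip
    rw [Finset.sum_congr rfl (fun σ _ => by rw [hmv σ])]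
    have h2 : ∀ σ : (Fin L × Fin twoJ) → Fin (1 + 1),
        (starRingEnd ℂ) (PsiVec twoJ L q m σ)
          * (K * ∑ π : Fin L → Equiv.Perm (Fin twoJ), PsiVec twoJ L q n (act π σ))
        = K * ((if (∀ j, rA σ j = m j)
              then ((q : ℂ) ^ (2 * ∑ x : Fin L, ((x : ℕ) + 1) * cA σ x)) else 0)
            * ((Mcount twoJ L n (cA σ)
                * ∏ x : Fin L, (cA σ x).factorial * (twoJ - cA σ x).factorial : ℕ) : ℂ)) := by
      intro σ
      have h3 : ∀ π : Fin L → Equiv.Perm (Fin twoJ),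
          (starRingEnd ℂ) (PsiVec twoJ L q m σ) * PsiVec twoJ L q n (act π σ)
          = (if (∀ j, rA σ j = m j)
              then ((q : ℂ) ^ (2 * ∑ x : Fin L, ((x : ℕ) + 1) * cA σ x)) else 0)
            * (if (∀ j, rA (act π σ) j = n j) then 1 else 0) := by
        intro π
        unfold PsiVec
        rw [cA_act]
        by_cases hm1 : ∀ j, rA σ j = m j
        · by_cases hn1 : ∀ j, rA (act π σ) j = n j
          · rw [if_pos hm1, if_pos hn1, if_pos hm1, if_pos hn1, mul_one,
              Complex.conj_ofReal, ← Complex.ofReal_mul, ← pow_add, ← two_mul,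
              Complex.ofReal_pow]
          · rw [if_neg hn1, if_neg hn1, mul_zero, mul_zero]
        · rw [if_neg hm1, if_neg hm1, map_zero, zero_mul, zero_mul]
      calc (starRingEnd ℂ) (PsiVec twoJ L q m σ)
            * (K * ∑ π : Fin L → Equiv.Perm (Fin twoJ), PsiVec twoJ L q n (act π σ))
          = K * ∑ π : Fin L → Equiv.Perm (Fin twoJ),
              (starRingEnd ℂ) (PsiVec twoJ L q m σ) * PsiVec twoJ L q n (act π σ) := by
            simp only [Finset.mul_sum]
            apply Finset.sum_congr rfl
            intro π _
            ring
        _ = K * ∑ π : Fin L → Equiv.Perm (Fin twoJ),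
              (if (∀ j, rA σ j = m j)
                then ((q : ℂ) ^ (2 * ∑ x : Fin L, ((x : ℕ) + 1) * cA σ x)) else 0)
              * (if (∀ j, rA (act π σ) j = n j) then (1:ℂ) else 0) := by
            rw [Finset.sum_congr rfl (fun π _ => h3 π)]
        _ = _ := by
            rw [← Finset.mul_sum, Finset.sum_boole, sum_pi_count]
    rw [Finset.sum_congr rfl (fun σ _ => h2 σ), ← Finset.mul_sum]
  rw [key]
  -- Step 4: RHS cast to ℂ
  have hRHS : ((∑ c : Fin L → Fin (twoJ + 1), if (∑ x, (c x : ℕ)) = N then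
          (Mcount twoJ L m (fun x => (c x : ℕ)) : ℝ) *
            (Mcount twoJ L n (fun x => (c x : ℕ)) : ℝ) *
            q ^ (2 * ∑ x : Fin L, ((x : ℕ) + 1) * (c x : ℕ)) *
            ∏ x : Fin L, ((Nat.choose twoJ (c x : ℕ) : ℝ))⁻¹
        else 0 : ℝ) : ℂ)
      = ∑ c : Fin L → Fin (twoJ + 1), if (∑ x, (c x : ℕ)) = N then
          (Mcount twoJ L m (fun x => (c x : ℕ)) : ℂ) *
            (Mcount twoJ L n (fun x => (c x : ℕ)) : ℂ) *
            (q : ℂ) ^ (2 * ∑ x : Fin L, ((x : ℕ) + 1) * (c x : ℕ)) *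
            ∏ x : Fin L, ((Nat.choose twoJ (c x : ℕ) : ℂ))⁻¹
        else 0 := by
    push_cast [apply_ite (Complex.ofReal)]
    rfl
  rw [hRHS]
  -- Step 5: fiberwise grouping over rung sums
  have cA_lt : ∀ (σ : (Fin L × Fin twoJ) → Fin (1 + 1)) (x : Fin L),
      cA σ x < twoJ + 1 := fun σ x => Nat.lt_succ_of_le (sum_fin2_le _)
  rw [← Finset.sum_fiberwise_of_maps_to
    (g := fun (σ : (Fin L × Fin twoJ) → Fin (1 + 1)) (x : Fin L) =>
      (⟨cA σ x, cA_lt σ x⟩ : Fin (twoJ + 1)))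
    (fun σ _ => Finset.mem_univ _)]
  rw [Finset.mul_sum]
  apply Finset.sum_congr rfl
  intro c _
  -- inner sum over the fiber
  have hfib : ∀ σ ∈ Finset.univ.filter (fun σ : (Fin L × Fin twoJ) → Fin (1 + 1) =>
        (fun x => (⟨cA σ x, cA_lt σ x⟩ : Fin (twoJ + 1))) = c),
      (if (∀ j, rA σ j = m j)
        then ((q : ℂ) ^ (2 * ∑ x : Fin L, ((x : ℕ) + 1) * cA σ x)) else 0)
        * ((Mcount twoJ L n (cA σ)
            * ∏ x : Fin L, (cA σ x).factorial * (twoJ - cA σ x).factorial : ℕ) : ℂ)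
      = (if (∀ j, rA σ j = m j) then (1:ℂ) else 0)
        * (((q : ℂ) ^ (2 * ∑ x : Fin L, ((x : ℕ) + 1) * (c x : ℕ)))
          * ((Mcount twoJ L n (fun x => (c x : ℕ))
              * ∏ x : Fin L, ((c x : ℕ)).factorial * (twoJ - (c x : ℕ)).factorial : ℕ) : ℂ)) := by
    intro σ hσ
    rw [Finset.mem_filter] at hσ
    have hc : ∀ x, cA σ x = (c x : ℕ) := by
      intro x
      have := congrFun hσ.2 x
      exact congrArg Fin.val this
    have hcc : cA σ = fun x => (c x : ℕ) := funext hc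
    rw [hcc]
    split_ifs with h <;> ring
  rw [Finset.sum_congr rfl hfib, ← Finset.sum_mul]
  have hcard : (∑ σ ∈ Finset.univ.filter (fun σ : (Fin L × Fin twoJ) → Fin (1 + 1) =>
        (fun x => (⟨cA σ x, cA_lt σ x⟩ : Fin (twoJ + 1))) = c),
        (if (∀ j, rA σ j = m j) then (1:ℂ) else 0))
      = (Mcount twoJ L m (fun x => (c x : ℕ)) : ℂ) := by
    rw [Finset.sum_boole, Finset.filter_filter]
    congr 1
    unfold Mcount
    congr 1
    apply Finset.filter_congr
    intro σ _
    constructor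
    · rintro ⟨h1, h2⟩
      refine ⟨h2, fun x => ?_⟩
      exact congrArg Fin.val (congrFun h1 x)
    · rintro ⟨h1, h2⟩
      exact ⟨funext fun x => Fin.ext (h2 x), h1⟩
  rw [hcard]
  -- Step 6: final algebra per c
  by_cases hc : (∑ x, (c x : ℕ)) = N
  · rw [if_pos hc]
    have hfact : ∀ x : Fin L,
        (((c x : ℕ)).factorial : ℂ) * ((twoJ - (c x : ℕ)).factorial : ℂ)
        = (Nat.factorial twoJ : ℂ) * ((Nat.choose twoJ (c x : ℕ) : ℂ))⁻¹ := by
      intro x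
      have hle : (c x : ℕ) ≤ twoJ := Nat.lt_succ_iff.mp (c x).2
      have h0 : (Nat.choose twoJ (c x : ℕ) : ℂ) ≠ 0 :=
        Nat.cast_ne_zero.mpr (Nat.choose_pos hle).ne'
      have hnat : ((c x : ℕ)).factorial * (twoJ - (c x : ℕ)).factorial
          * Nat.choose twoJ (c x : ℕ) = Nat.factorial twoJ := by
        rw [mul_comm, ← mul_assoc, Nat.choose_mul_factorial_mul_factorial hle]
      rw [eq_comm, mul_inv_eq_iff_eq_mul₀ h0]
      exact_mod_cast (congrArg (Nat.cast : ℕ → ℂ) hnat).symm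
    have hprod : ((Mcount twoJ L n (fun x => (c x : ℕ))
          * ∏ x : Fin L, ((c x : ℕ)).factorial * (twoJ - (c x : ℕ)).factorial : ℕ) : ℂ)
        = (Mcount twoJ L n (fun x => (c x : ℕ)) : ℂ)
          * ((Nat.factorial twoJ : ℂ) ^ L * ∏ x : Fin L, ((Nat.choose twoJ (c x : ℕ) : ℂ))⁻¹) := by
      push_cast
      rw [Finset.prod_congr rfl (fun x _ => hfact x), Finset.prod_mul_distrib,
        Finset.prod_const, Finset.card_univ, Fintype.card_fin]
    rw [hprod]
    have hK0 : ((Nat.factorial twoJ : ℂ)) ^ L ≠ 0 :=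
      pow_ne_zero _ (Nat.cast_ne_zero.mpr (Nat.factorial_ne_zero _))
    have hK1 : K * ((Nat.factorial twoJ : ℂ)) ^ L = 1 := by
      rw [hK]; exact inv_mul_cancel₀ hK0
    linear_combination ((Mcount twoJ L m fun x => ((c x : ℕ))) : ℂ)
      * ((Mcount twoJ L n fun x => ((c x : ℕ))) : ℂ)
      * (q : ℂ) ^ (2 * ∑ x : Fin L, ((x : ℕ) + 1) * ((c x : ℕ)))
      * (∏ x : Fin L, ((Nat.choose twoJ ((c x : ℕ)) : ℂ))⁻¹) * hK1
  · rw [if_neg hc]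
    have : Mcount twoJ L m (fun x => (c x : ℕ)) = 0 := by
      apply Mcount_eq_zero
      rw [hm]
      exact hc
    rw [this]
    simp
end XXZ
end
end
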